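/- arXiv:2605.21679 — 9 statements merged into one kernel-verified Lean document; each statement's English description precedes it below -/
import Mathlib

section
/- If A is an M-matrix with a triplet representation, then A is either nonsingular or 0 is a semisimple eigenvalue of A (i.e., the algebraic and geometric multiplicities of the eigenvalue 0 coincide). -/
open Matrix

/-!
Write `A = α • 1 - B` with `B ≥ 0`. The triplet condition gives `B u ≤ α u` for the positive
vector `u`, so in the weighted sup-norm `‖z‖_u = max_i |z_i| / u_i` we have
`‖B^k z‖_u ≤ α^k ‖z‖_u`. If `A² x = 0` and `y = A x`, then `B y = α y`, hence
`B^(k+1) x = α^(k+1) x - (k+1) α^k y`, and so `(k+1) α^k ‖y‖_u ≤ 2 α^(k+1) ‖x‖_u` for every `k`.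
This forces `y = 0`.
-/

noncomputable def toC {n : ℕ} (A : Matrix (Fin n) (Fin n) ℝ) : Matrix (Fin n) (Fin n) ℂ :=
  A.map (fun x => (x : ℂ))

def IsEig {n : ℕ} (A : Matrix (Fin n) (Fin n) ℂ) (μ : ℂ) : Prop :=
  ∃ v : Fin n → ℂ, v ≠ 0 ∧ A *ᵥ v = μ • v

noncomputable def specRad {n : ℕ} (B : Matrix (Fin n) (Fin n) ℝ) : ℝ :=
  sSup {r : ℝ | ∃ μ : ℂ, IsEig (toC B) μ ∧ r = ‖μ‖}

def IsMmat {n : ℕ} (A : Matrix (Fin n) (Fin n) ℝ) : Prop :=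
  ∃ (α : ℝ) (B : Matrix (Fin n) (Fin n) ℝ),
    (∀ i j, 0 ≤ B i j) ∧ specRad B ≤ α ∧ A = α • (1 : Matrix (Fin n) (Fin n) ℝ) - B

variable {ι : Type*} [Fintype ι]

theorem pow_succ_mulVec_of_sub_sq_mulVec_eq_zero [DecidableEq ι] {R : Type*} [CommRing R]
    (B : Matrix ι ι R) (a : R) (x : ι → R) (h : (a • 1 - B) *ᵥ ((a • 1 - B) *ᵥ x) = 0) (k : ℕ) :
    (B ^ (k + 1)) *ᵥ x = a ^ (k + 1) • x - ((k + 1) * a ^ k) • ((a • 1 - B) *ᵥ x) := by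
  set y := (a • 1 - B) *ᵥ x
  have hBx : B *ᵥ x = a • x - y := by
    simp only [y, sub_mulVec, smul_mulVec, one_mulVec]; abel
  have hBy : B *ᵥ y = a • y := by
    rw [sub_mulVec, smul_mulVec, one_mulVec, sub_eq_zero] at h
    exact h.symm
  induction k with
  | zero => simpa using hBx
  | succ k ih =>
    rw [pow_succ', ← mulVec_mulVec, ih, mulVec_sub, mulVec_smul, mulVec_smul, hBx, hBy]
    push_cast
    match_scalars <;> ring

theorem norm_map_mulVec_le {B : Matrix ι ι ℝ} (hB : ∀ i j, 0 ≤ B i j) {z : ι → ℂ} {w : ι → ℝ}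
    (hz : ∀ i, ‖z i‖ ≤ w i) (i : ι) : ‖(B.map (↑) *ᵥ z) i‖ ≤ (B *ᵥ w) i :=
  calc ‖(B.map (↑) *ᵥ z) i‖ = ‖∑ j, (B i j : ℂ) * z j‖ := by simp [mulVec, dotProduct]
    _ ≤ ∑ j, ‖(B i j : ℂ) * z j‖ := norm_sum_le _ _
    _ = ∑ j, B i j * ‖z j‖ := by simp [Complex.norm_real, abs_of_nonneg (hB i _)]
    _ ≤ (B *ᵥ w) i := Finset.sum_le_sum fun j _ => mul_le_mul_of_nonneg_left (hz j) (hB i j)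

theorem norm_map_pow_mulVec_le [DecidableEq ι] {B : Matrix ι ι ℝ} (hB : ∀ i j, 0 ≤ B i j)
    {α : ℝ} (hα : 0 ≤ α) {u : ι → ℝ} (hBu : ∀ i, (B *ᵥ u) i ≤ α * u i) {z : ι → ℂ} {c : ℝ}
    (hc : 0 ≤ c) (hz : ∀ i, ‖z i‖ ≤ c * u i) (k : ℕ) (i : ι) :
    ‖((B.map (↑)) ^ k *ᵥ z) i‖ ≤ α ^ k * c * u i := by
  induction k generalizing i with
  | zero => simpa using hz i
  | succ k ih =>
    rw [pow_succ', ← mulVec_mulVec]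
    calc _ ≤ (B *ᵥ ((α ^ k * c) • u)) i :=
          norm_map_mulVec_le hB (by simpa [mul_assoc] using ih) i
      _ = α ^ k * c * (B *ᵥ u) i := by simp [mulVec_smul]
      _ ≤ α ^ (k + 1) * c * u i := by
        rw [pow_succ]
        nlinarith [mul_le_mul_of_nonneg_left (hBu i) (mul_nonneg (pow_nonneg hα k) hc)]

theorem exists_forall_norm_le_mul {E : Type*} [SeminormedAddGroup E] {u : ι → ℝ}
    (hu : ∀ i, 0 < u i) (x : ι → E) : ∃ c, 0 ≤ c ∧ ∀ i, ‖x i‖ ≤ c * u i := by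
  have hterm : ∀ j, 0 ≤ ‖x j‖ / u j := fun j => div_nonneg (norm_nonneg _) (hu j).le
  refine ⟨∑ j, ‖x j‖ / u j, Finset.sum_nonneg fun j _ => hterm j, fun i => ?_⟩
  rw [← div_le_iff₀ (hu i)]
  exact Finset.single_le_sum (fun j _ => hterm j) (Finset.mem_univ i)

theorem nonpos_of_forall_succ_mul_pow_mul_le {α a b : ℝ} (hα : 0 ≤ α)
    (h : ∀ k : ℕ, (k + 1) * α ^ k * a ≤ α ^ (k + 1) * b) : a ≤ 0 := by
  rcases hα.eq_or_lt with rfl | hα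
  · simpa using h 0
  by_contra! ha
  obtain ⟨k, hk⟩ := exists_nat_gt (α * b / a)
  have hka : α * b < (k + 1) * a := by
    rw [div_lt_iff₀ ha] at hk
    linarith
  have : α ^ k * ((k + 1) * a) ≤ α ^ k * (α * b) := by linear_combination h k
  exact hka.not_ge (le_of_mul_le_mul_left this (pow_pos hα k))

theorem sub_map_mulVec_eq_zero_of_sq [DecidableEq ι] {B : Matrix ι ι ℝ} (hB : ∀ i j, 0 ≤ B i j)
    {α : ℝ} (hα : 0 ≤ α) {u : ι → ℝ} (hu : ∀ i, 0 < u i) (hBu : ∀ i, (B *ᵥ u) i ≤ α * u i)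
    {x : ι → ℂ} (hx : ((α : ℂ) • 1 - B.map (↑)) *ᵥ (((α : ℂ) • 1 - B.map (↑)) *ᵥ x) = 0) :
    ((α : ℂ) • 1 - B.map (↑)) *ᵥ x = 0 := by
  set y := ((α : ℂ) • 1 - B.map (↑)) *ᵥ x
  obtain ⟨c, hc, hxc⟩ := exists_forall_norm_le_mul hu x
  funext i
  rw [Pi.zero_apply, ← norm_le_zero_iff]
  refine nonpos_of_forall_succ_mul_pow_mul_le hα (b := 2 * c * u i) fun k => ?_
  have hy : ((k + 1 : ℂ) * (α : ℂ) ^ k) • y =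
      (α : ℂ) ^ (k + 1) • x - (B.map (↑)) ^ (k + 1) *ᵥ x := by
    rw [pow_succ_mulVec_of_sub_sq_mulVec_eq_zero _ _ _ hx]; abel
  calc (k + 1) * α ^ k * ‖y i‖ = ‖(((k + 1 : ℂ) * (α : ℂ) ^ k) • y) i‖ := by
        have hk : ‖(k + 1 : ℂ)‖ = k + 1 := by exact_mod_cast Complex.norm_natCast (k + 1)
        rw [Pi.smul_apply, smul_eq_mul, norm_mul, norm_mul, norm_pow, Complex.norm_real,
          Real.norm_of_nonneg hα, hk]
    _ ≤ ‖((α : ℂ) ^ (k + 1) • x) i‖ + ‖((B.map (↑)) ^ (k + 1) *ᵥ x) i‖ := by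
        rw [hy]; exact norm_sub_le _ _
    _ ≤ α ^ (k + 1) * (c * u i) + α ^ (k + 1) * c * u i := by
        gcongr
        · simpa [Complex.norm_real, abs_of_nonneg hα] using
            mul_le_mul_of_nonneg_left (hxc i) (pow_nonneg hα (k + 1))
        · exact norm_map_pow_mulVec_le hB hα hBu hc hxc (k + 1) i
    _ = α ^ (k + 1) * (2 * c * u i) := by ring

theorem toC_smul_one_sub {n : ℕ} (α : ℝ) (B : Matrix (Fin n) (Fin n) ℝ) :
    toC (α • 1 - B) = (α : ℂ) • 1 - B.map (↑) := by
  ext i j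
  by_cases h : i = j <;> simp [toC, one_apply, h]

/-- If A is an M-matrix with a triplet representation, then A is nonsingular or
0 is a semisimple eigenvalue (ker A = ker A², over ℂ). -/
theorem stmt4 {n : ℕ} (A : Matrix (Fin n) (Fin n) ℝ) (hA : IsMmat A)
    (u v : Fin n → ℝ) (hu : ∀ i, 0 < u i) (hv : ∀ i, 0 ≤ v i) (hAu : A *ᵥ u = v) :
    IsUnit A ∨ ∀ x : Fin n → ℂ, toC A *ᵥ (toC A *ᵥ x) = 0 → toC A *ᵥ x = 0 := by
  obtain ⟨α, B, hB, -, rfl⟩ := hA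
  right
  intro x hx
  have hBu : ∀ i, (B *ᵥ u) i ≤ α * u i := fun i => by
    have := congrFun hAu i
    simp only [sub_mulVec, smul_mulVec, one_mulVec, Pi.sub_apply, Pi.smul_apply,
      smul_eq_mul] at this
    linarith [hv i]
  rcases isEmpty_or_nonempty (Fin n) with _ | ⟨⟨i⟩⟩
  · exact Subsingleton.elim _ _
  have hBu_nonneg : 0 ≤ (B *ᵥ u) i :=
    Finset.sum_nonneg (s := Finset.univ) fun j _ => mul_nonneg (hB i j) (hu j).le
  have hα : 0 ≤ α := nonneg_of_mul_nonneg_left (hBu_nonneg.trans (hBu i)) (hu i)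
  rw [toC_smul_one_sub] at hx ⊢
  exact sub_map_mulVec_eq_zero_of_sq hB hα hu hBu hx
end

section
/- Let A be an invertible M-matrix with triplet representation (P, u, v), so Au = v with u > 0, v ≥ 0. Then the principal square root A^{1/2} satisfies A^{1/2}u = A^{-1/2}v ≥ 0; hence A^{1/2} admits the triplet representation (−offdiag(A^{1/2}), u, A^{-1/2}v). -/
open Matrix

/-! A Z-matrix `S` whose complex eigenvalues have positive real part has an entrywise nonnegative
inverse. For large `c`, `S + c • 1 = r • 1 - B` with `B ≥ 0` and `‖B‖ < r`, so its inverse is a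
nonnegative Neumann series. Lowering `c` to `0`, `S + t • 1` stays invertible (`-t` is not an
eigenvalue), nonnegativity of the inverse is a closed condition, and it propagates downwards because
`(N - δ • 1)⁻¹ = (1 - δ • N⁻¹)⁻¹ * N⁻¹` is again a product of nonnegative matrices for small `δ`.
Applied to `S = A^{1/2}`: `S *ᵥ u = S⁻¹ *ᵥ (S * S *ᵥ u) = S⁻¹ *ᵥ v ≥ 0`. -/

open Topology

namespace Matrix

variable {ι : Type*} [Fintype ι] [DecidableEq ι]

section LinftyOpNorm

attribute [local instance] Matrix.linftyOpNormedRing Matrix.linftyOpNormedAlgebra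

theorem inv_one_sub_apply_nonneg {M : Matrix ι ι ℝ} (hM : ∀ i j, 0 ≤ M i j) (h : ‖M‖ < 1)
    (i j : ι) : 0 ≤ (1 - M)⁻¹ i j := by
  have hs := hasSum_geom_series_inverse M h
  rw [← nonsing_inv_eq_ringInverse] at hs
  exact (Pi.hasSum.mp (Pi.hasSum.mp hs i) j).nonneg fun k => pow_apply_nonneg hM k i j

theorem inv_smul_one_sub_apply_nonneg {B : Matrix ι ι ℝ} (hB : ∀ i j, 0 ≤ B i j) {r : ℝ}
    (h : ‖B‖ < r) (i j : ι) : 0 ≤ (r • (1 : Matrix ι ι ℝ) - B)⁻¹ i j := by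
  have hr : 0 < r := (norm_nonneg B).trans_lt h
  have hC : ‖r⁻¹ • B‖ < 1 := by
    rwa [norm_smul, Real.norm_of_nonneg (inv_nonneg.mpr hr.le), inv_mul_lt_one₀ hr]
  have hdet : IsUnit (1 - r⁻¹ • B).det :=
    (isUnit_iff_isUnit_det _).mp (isUnit_one_sub_of_norm_lt_one hC)
  have hfac : r • (1 : Matrix ι ι ℝ) - B = r • (1 - r⁻¹ • B) := by
    rw [smul_sub, smul_inv_smul₀ hr.ne']
  have hinv : (r • (1 : Matrix ι ι ℝ) - B)⁻¹ = r⁻¹ • (1 - r⁻¹ • B)⁻¹ := by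
    refine inv_eq_left_inv ?_
    rw [hfac, smul_mul_smul_comm, inv_mul_cancel₀ hr.ne', nonsing_inv_mul _ hdet, one_smul]
  rw [hinv, smul_apply, smul_eq_mul]
  exact mul_nonneg (inv_nonneg.mpr hr.le)
    (inv_one_sub_apply_nonneg (fun i j => mul_nonneg (inv_nonneg.mpr hr.le) (hB i j)) hC i j)

theorem inv_sub_smul_one_apply_nonneg {N : Matrix ι ι ℝ} (hN : IsUnit N.det)
    (hN' : ∀ i j, 0 ≤ N⁻¹ i j) {δ : ℝ} (hδ : 0 ≤ δ) (h : δ * ‖N⁻¹‖ < 1) (i j : ι) :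
    0 ≤ (N - δ • (1 : Matrix ι ι ℝ))⁻¹ i j := by
  have hfac : N - δ • (1 : Matrix ι ι ℝ) = N * (1 - δ • N⁻¹) := by
    rw [mul_sub, mul_one, Matrix.mul_smul, mul_nonsing_inv _ hN]
  have hM : ‖δ • N⁻¹‖ < 1 := by rwa [norm_smul, Real.norm_of_nonneg hδ]
  rw [hfac, mul_inv_rev, mul_apply]
  have := inv_one_sub_apply_nonneg (fun i j => mul_nonneg hδ (hN' i j)) hM
  exact Finset.sum_nonneg fun l _ => mul_nonneg (this i l) (hN' l j)

theorem inv_apply_nonneg_of_inv_add_smul_one_apply_nonneg {S : Matrix ι ι ℝ} {c : ℝ}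
    (hc : 0 ≤ c) (hdet : ∀ t ∈ Set.Icc 0 c, IsUnit (S + t • (1 : Matrix ι ι ℝ)).det)
    (hSc : ∀ i j, 0 ≤ (S + c • (1 : Matrix ι ι ℝ))⁻¹ i j) (i j : ι) : 0 ≤ S⁻¹ i j := by
  set s := {t : ℝ | ∀ i j, 0 ≤ (S + t • (1 : Matrix ι ι ℝ))⁻¹ i j}
  have hcont : ContinuousOn (fun t : ℝ => (S + t • (1 : Matrix ι ι ℝ))⁻¹) (Set.Icc 0 c) :=
    fun t ht => ((continuousAt_matrix_inv _ (by
      rw [Ring.inverse_eq_inv']; exact continuousAt_inv₀ (hdet t ht).ne_zero)).comp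
      (by fun_prop)).continuousWithinAt
  have hclosed : IsClosed (s ∩ Set.Icc 0 c) := by
    rw [Set.inter_comm]
    refine hcont.preimage_isClosed_of_isClosed (t := {M | ∀ i j, 0 ≤ M i j}) isClosed_Icc ?_
    simp only [Set.ofPred_forall]
    exact isClosed_iInter fun i => isClosed_iInter fun j =>
      isClosed_le continuous_const (continuous_id.matrix_elem i j)
  have hstep : ∀ x ∈ s ∩ Set.Ioc 0 c, (s ∩ Set.Ico 0 x).Nonempty := by
    rintro x ⟨hx, hx0, hxc⟩
    have hnear : ∀ᶠ y in 𝓝 x, (x - y) * ‖(S + x • (1 : Matrix ι ι ℝ))⁻¹‖ < 1 :=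
      (continuous_const.sub continuous_id).mul continuous_const |>.continuousAt.eventually_lt
        continuousAt_const (by simp)
    obtain ⟨y, hy, hyx⟩ := ((hnear.filter_mono nhdsWithin_le_nhds).and (Ioo_mem_nhdsLT hx0)).exists
    refine ⟨y, fun i j => ?_, hyx.1.le, hyx.2⟩
    have hshift : S + y • (1 : Matrix ι ι ℝ) = S + x • 1 - (x - y) • 1 := by
      rw [sub_smul]; abel
    rw [hshift]
    exact inv_sub_smul_one_apply_nonneg (hdet x ⟨hx0.le, hxc⟩) hx (by linarith [hyx.2]) hy i j
  simpa using hclosed.mem_of_ge_of_forall_exists_lt hSc hc hstep i j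

theorem isEig_toC_of_mulVec_eq_smul {n : ℕ} {S : Matrix (Fin n) (Fin n) ℝ} {w : Fin n → ℝ}
    (hw : w ≠ 0) {r : ℝ} (h : S *ᵥ w = r • w) : IsEig (toC S) r := by
  refine ⟨Complex.ofRealHom ∘ w, fun h0 => hw (funext fun i => ?_), funext fun i => ?_⟩
  · simpa using congrFun h0 i
  · change (S.map Complex.ofRealHom *ᵥ (Complex.ofRealHom ∘ w)) i = _
    rw [← RingHom.map_mulVec, h]
    simp

theorem isUnit_det_add_smul_one_of_eig_re_pos {n : ℕ} {S : Matrix (Fin n) (Fin n) ℝ}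
    (hS : ∀ μ : ℂ, IsEig (toC S) μ → 0 < μ.re) {t : ℝ} (ht : 0 ≤ t) :
    IsUnit (S + t • (1 : Matrix (Fin n) (Fin n) ℝ)).det := by
  rw [isUnit_iff_ne_zero]
  intro hdet
  obtain ⟨w, hw, hSw⟩ := exists_mulVec_eq_zero_iff.mpr hdet
  have hEig : IsEig (toC S) (-t : ℝ) := by
    refine isEig_toC_of_mulVec_eq_smul hw ?_
    rw [add_mulVec, smul_mulVec, one_mulVec] at hSw
    rw [neg_smul, eq_neg_iff_add_eq_zero, hSw]
  have := hS _ hEig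
  simp only [Complex.ofReal_re] at this
  linarith

theorem inv_smul_one_sub_apply_nonneg_of_eig_re_pos {n : ℕ} {α : ℝ}
    {B : Matrix (Fin n) (Fin n) ℝ} (hB : ∀ i j, 0 ≤ B i j)
    (hS : ∀ μ : ℂ, IsEig (toC (α • 1 - B)) μ → 0 < μ.re) (i j : Fin n) :
    0 ≤ (α • (1 : Matrix (Fin n) (Fin n) ℝ) - B)⁻¹ i j := by
  have hshift (c : ℝ) : α • 1 - B + c • (1 : Matrix (Fin n) (Fin n) ℝ) = (α + c) • 1 - B := by
    rw [add_smul]; abel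
  have hBc : ‖B‖ < α + (|α| + ‖B‖ + 1) := by linarith [neg_abs_le α]
  refine inv_apply_nonneg_of_inv_add_smul_one_apply_nonneg (c := |α| + ‖B‖ + 1) (by positivity)
    (fun t ht => isUnit_det_add_smul_one_of_eig_re_pos hS ht.1) ?_ i j
  rw [hshift]
  exact inv_smul_one_sub_apply_nonneg hB hBc

end LinftyOpNorm

end Matrix

theorem stmt9_general {n : ℕ} (A S : Matrix (Fin n) (Fin n) ℝ) (hAinv : IsUnit A)
    (u v : Fin n → ℝ) (hv : ∀ i, 0 ≤ v i) (hAu : A *ᵥ u = v)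
    (hSsq : S * S = A) (hSeig : ∀ μ : ℂ, IsEig (toC S) μ → 0 < μ.re)
    (hSM : IsMmat S) :
    S *ᵥ u = S⁻¹ *ᵥ v ∧ ∀ i, 0 ≤ (S⁻¹ *ᵥ v) i := by
  obtain ⟨α, B, hB, -, rfl⟩ := hSM
  have hSinv := inv_smul_one_sub_apply_nonneg_of_eig_re_pos hB hSeig
  have hSdet : IsUnit (α • 1 - B).det := by
    rw [← isUnit_iff_isUnit_det]
    exact isUnit_of_mul_isUnit_left (hSsq ▸ hAinv)
  refine ⟨?_, fun i => ?_⟩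
  · rw [← hAu, ← hSsq, mulVec_mulVec, ← mul_assoc, nonsing_inv_mul _ hSdet, one_mul]
  · simp only [mulVec, dotProduct]
    exact Finset.sum_nonneg fun j _ => mul_nonneg (hSinv i j) (hv j)

/-- For an invertible M-matrix A with triplet (u,v), the principal square root S = A^{1/2}
(the M-matrix square root with spectrum in the open right half plane) satisfies
S u = S⁻¹ v ≥ 0, giving a triplet representation (-offdiag S, u, S⁻¹ v) of S. -/
theorem stmt9 {n : ℕ} (A S : Matrix (Fin n) (Fin n) ℝ) (hA : IsMmat A) (hAinv : IsUnit A)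
    (u v : Fin n → ℝ) (hu : ∀ i, 0 < u i) (hv : ∀ i, 0 ≤ v i) (hAu : A *ᵥ u = v)
    (hSsq : S * S = A) (hSeig : ∀ μ : ℂ, IsEig (toC S) μ → 0 < μ.re)
    (hSM : IsMmat S) :
    S *ᵥ u = S⁻¹ *ᵥ v ∧ ∀ i, 0 ≤ (S⁻¹ *ᵥ v) i :=
  stmt9_general A S hAinv u v hv hAu hSsq hSeig hSM
end

section
/- Let A be an M-matrix with a triplet representation. Then the principal square root A^{1/2} exists, is an M-matrix, and admits a triplet representation. -/
open Matrix

/-!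
Shifting the diagonal writes `A = s (1 - C)` with `s > 0`, `C ≥ 0` entrywise and `C u ≤ u`.
Then `C ^ k u ≤ u` for all `k`, so the powers of `C` are bounded and the binomial series
`T = ∑ c_k C ^ k` of `√(1 - x)` converges absolutely; `T ^ 2 = 1 - C` by the Cauchy product
and Chu–Vandermonde. As `c_k ≤ 0` for `k ≥ 1` while `∑ c_k ≥ 0`, both `1 - T ≥ 0` entrywise
and `T u ≥ 0`. Hence `S = √s T = √s - M` with `M ≥ 0` and `M u ≤ √s u`: the Collatz–Wielandt
bound puts every eigenvalue of `M` in the disc of radius `√s`, so `S` is an M-matrix with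
triplet vector `u` and its nonzero eigenvalues lie in the open right half plane. Finally `T`
lies in the (closed, finite-dimensional) subalgebra generated by `A`, so it is a polynomial
in `A`.
-/

open Finset

-- `√(1 - x) = ∑ k, sqrtCoeff k * x ^ k`
noncomputable def sqrtCoeff (k : ℕ) : ℝ := (-1) ^ k * Ring.choose (1 / 2 : ℝ) k

lemma sqrtCoeff_zero : sqrtCoeff 0 = 1 := by simp [sqrtCoeff]

lemma sqrtCoeff_succ (k : ℕ) : sqrtCoeff (k + 1) = sqrtCoeff k * (k - 1 / 2) / (k + 1) := by
  have h := Ring.choose_smul_choose (1 / 2 : ℝ) (Nat.le_succ k)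
  rw [Nat.choose_succ_self_right, show k.succ - k = 1 by omega, Ring.choose_one_right,
    nsmul_eq_mul] at h
  push_cast at h
  rw [eq_div_iff (by positivity), sqrtCoeff, sqrtCoeff, pow_succ]
  linear_combination (-(-1) ^ k : ℝ) * h

lemma sqrtCoeff_succ_nonpos (k : ℕ) : sqrtCoeff (k + 1) ≤ 0 := by
  induction k with
  | zero => rw [sqrtCoeff_succ, sqrtCoeff_zero]; norm_num
  | succ k ih =>
    rw [sqrtCoeff_succ]
    have : (0 : ℝ) ≤ (k + 1 : ℕ) - 1 / 2 := by push_cast; linarith [k.cast_nonneg (α := ℝ)]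
    exact div_nonpos_of_nonpos_of_nonneg (mul_nonpos_of_nonpos_of_nonneg ih this) (by positivity)

lemma sum_range_sqrtCoeff (N : ℕ) : ∑ k ∈ range N, sqrtCoeff k = -2 * N * sqrtCoeff N := by
  induction N with
  | zero => simp
  | succ N ih =>
    rw [sum_range_succ, ih, sqrtCoeff_succ]
    push_cast
    field_simp
    ring

lemma sum_range_sqrtCoeff_nonneg (N : ℕ) : 0 ≤ ∑ k ∈ range N, sqrtCoeff k := by
  rw [sum_range_sqrtCoeff]
  cases N with
  | zero => simp
  | succ N =>
    exact mul_nonneg_of_nonpos_of_nonpos (by push_cast; linarith [N.cast_nonneg (α := ℝ)])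
      (sqrtCoeff_succ_nonpos N)

lemma sum_range_abs_sqrtCoeff_le (N : ℕ) : ∑ k ∈ range N, |sqrtCoeff k| ≤ 2 := by
  cases N with
  | zero => simp
  | succ N =>
    have h := sum_range_sqrtCoeff_nonneg (N + 1)
    rw [sum_range_succ'] at h ⊢
    simp only [abs_of_nonpos (sqrtCoeff_succ_nonpos _), sum_neg_distrib, sqrtCoeff_zero,
      abs_one] at h ⊢
    linarith

lemma summable_abs_sqrtCoeff : Summable fun k => |sqrtCoeff k| :=
  summable_of_sum_range_le (fun _ => abs_nonneg _) sum_range_abs_sqrtCoeff_le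

lemma tsum_sqrtCoeff_nonneg : 0 ≤ ∑' k, sqrtCoeff k :=
  ge_of_tendsto' summable_abs_sqrtCoeff.of_abs.hasSum.tendsto_sum_nat sum_range_sqrtCoeff_nonneg

lemma sum_antidiagonal_sqrtCoeff_mul (m : ℕ) :
    ∑ p ∈ antidiagonal m, sqrtCoeff p.1 * sqrtCoeff p.2 = (-1) ^ m * (Nat.choose 1 m : ℝ) := by
  have h := Ring.add_choose_eq m (Commute.all (1 / 2 : ℝ) (1 / 2))
  have h1 : Ring.choose (1 : ℝ) m = Nat.choose 1 m := by
    simpa using Ring.choose_natCast (R := ℝ) 1 m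
  rw [add_halves, h1] at h
  rw [h, mul_sum]
  refine sum_congr rfl fun p hp => ?_
  rw [← mem_antidiagonal.mp hp, pow_add, sqrtCoeff, sqrtCoeff]
  ring

section SqrtSeries

variable {E : Type*} [Ring E] [Algebra ℝ E] [TopologicalSpace E]

noncomputable def sqrtOneSub (x : E) : E := ∑' k, sqrtCoeff k • x ^ k

lemma sqrtOneSub_mem {S : Subalgebra ℝ E} (hS : IsClosed (S : Set E)) {x : E} (hx : x ∈ S) :
    sqrtOneSub x ∈ S := by
  by_cases h : Summable fun k => sqrtCoeff k • x ^ k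
  · exact hS.mem_of_tendsto h.hasSum.tendsto_sum_nat (Filter.Eventually.of_forall fun N =>
      sum_mem fun k _ => S.smul_mem (pow_mem hx k) _)
  · rw [sqrtOneSub, tsum_eq_zero_of_not_summable h]
    exact zero_mem S

lemma sqrtOneSub_mem_adjoin_smul_one_sub [IsTopologicalAddGroup E] [ContinuousSMul ℝ E]
    [T2Space E] [FiniteDimensional ℝ E] {s : ℝ} (hs : s ≠ 0) (x : E) :
    sqrtOneSub x ∈ Algebra.adjoin ℝ {s • (1 - x)} := by
  have hx := sub_mem (one_mem _)
    (Subalgebra.smul_mem _ (Algebra.self_mem_adjoin_singleton ℝ (s • (1 - x))) s⁻¹)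
  rw [inv_smul_smul₀ hs, sub_sub_cancel] at hx
  exact sqrtOneSub_mem
    (Subalgebra.toSubmodule (Algebra.adjoin ℝ {s • (1 - x)})).closed_of_finiteDimensional hx

end SqrtSeries

lemma sqrtOneSub_mul_self {E : Type*} [NormedRing E] [NormedAlgebra ℝ E] [CompleteSpace E]
    {x : E} (hx : Summable fun k => ‖sqrtCoeff k • x ^ k‖) :
    sqrtOneSub x * sqrtOneSub x = 1 - x := by
  rw [sqrtOneSub, tsum_mul_tsum_eq_tsum_sum_antidiagonal_of_summable_norm hx hx]
  have hterm : ∀ m, ∑ p ∈ antidiagonal m, sqrtCoeff p.1 • x ^ p.1 * (sqrtCoeff p.2 • x ^ p.2) =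
      ((-1) ^ m * (Nat.choose 1 m : ℝ)) • x ^ m := by
    intro m
    rw [← sum_antidiagonal_sqrtCoeff_mul, sum_smul]
    refine sum_congr rfl fun p hp => ?_
    rw [smul_mul_smul_comm, ← pow_add, mem_antidiagonal.mp hp]
  rw [tsum_congr hterm, tsum_eq_sum (s := range 2) fun m hm => ?_]
  · simp [sum_range_succ, sub_eq_add_neg]
  · rw [Nat.choose_eq_zero_of_lt (by simp at hm; omega)]
    simp

section NonnegMatrix

variable {ι : Type*} [Fintype ι] {C : Matrix ι ι ℝ} {u : ι → ℝ}

lemma mulVec_mono_of_nonneg (hC : ∀ i j, 0 ≤ C i j) {x y : ι → ℝ} (h : x ≤ y) :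
    C *ᵥ x ≤ C *ᵥ y :=
  fun i => sum_le_sum fun j _ => mul_le_mul_of_nonneg_left (h j) (hC i j)

variable [DecidableEq ι]

lemma pow_mulVec_le (hC : ∀ i j, 0 ≤ C i j) (hCu : C *ᵥ u ≤ u) (k : ℕ) : C ^ k *ᵥ u ≤ u := by
  induction k with
  | zero => rw [pow_zero, one_mulVec]
  | succ k ih =>
    rw [pow_succ, ← mulVec_mulVec]
    exact (mulVec_mono_of_nonneg (pow_apply_nonneg hC k) hCu).trans ih

section LinftyNorm

attribute [local instance] Matrix.linftyOpNormedRing Matrix.linftyOpNormedAlgebra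

lemma linfty_opNorm_le_of_mulVec_le (hC : ∀ i j, 0 ≤ C i j) (hu : ∀ i, 0 < u i)
    (hCu : C *ᵥ u ≤ u) : ‖C‖ ≤ ‖u‖ * ∑ j, (u j)⁻¹ := by
  have hentry : ∀ i j, C i j ≤ ‖u‖ * (u j)⁻¹ := fun i j => by
    rw [le_mul_inv_iff₀ (hu j)]
    calc C i j * u j ≤ (C *ᵥ u) i :=
          single_le_sum (f := fun j => C i j * u j) (fun l _ => mul_nonneg (hC i l) (hu l).le)
            (mem_univ j)
      _ ≤ u i := hCu i
      _ ≤ ‖u‖ := (le_abs_self _).trans (norm_le_pi_norm u i)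
  rw [show ‖C‖ = ‖fun i => WithLp.toLp 1 (C i)‖ from rfl,
    pi_norm_le_iff_of_nonneg
      (mul_nonneg (norm_nonneg u) (sum_nonneg fun j _ => (inv_pos.2 (hu j)).le))]
  intro i
  rw [PiLp.norm_eq_of_L1, mul_sum]
  exact sum_le_sum fun j _ => by simpa [abs_of_nonneg (hC i j)] using hentry i j

lemma summable_norm_sqrtCoeff_smul_pow (hC : ∀ i j, 0 ≤ C i j) (hu : ∀ i, 0 < u i)
    (hCu : C *ᵥ u ≤ u) : Summable fun k => ‖sqrtCoeff k • C ^ k‖ := by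
  refine (summable_abs_sqrtCoeff.mul_right (‖u‖ * ∑ j, (u j)⁻¹)).of_nonneg_of_le
    (fun _ => norm_nonneg _) fun k => ?_
  rw [norm_smul, Real.norm_eq_abs]
  exact mul_le_mul_of_nonneg_left (linfty_opNorm_le_of_mulVec_le (pow_apply_nonneg hC k) hu
    (pow_mulVec_le hC hCu k)) (abs_nonneg _)

lemma sqrtOneSub_mul_self_of_mulVec_le (hC : ∀ i j, 0 ≤ C i j) (hu : ∀ i, 0 < u i)
    (hCu : C *ᵥ u ≤ u) : sqrtOneSub C * sqrtOneSub C = 1 - C :=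
  sqrtOneSub_mul_self (summable_norm_sqrtCoeff_smul_pow hC hu hCu)

lemma hasSum_sqrtOneSub (hC : ∀ i j, 0 ≤ C i j) (hu : ∀ i, 0 < u i) (hCu : C *ᵥ u ≤ u) :
    HasSum (fun k => sqrtCoeff k • C ^ k) (sqrtOneSub C) :=
  (summable_norm_sqrtCoeff_smul_pow hC hu hCu).of_norm.hasSum

end LinftyNorm

lemma sqrtOneSub_mulVec_nonneg (hC : ∀ i j, 0 ≤ C i j) (hu : ∀ i, 0 < u i)
    (hCu : C *ᵥ u ≤ u) : 0 ≤ sqrtOneSub C *ᵥ u := by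
  have hT : HasSum (fun k => sqrtCoeff k • (C ^ k *ᵥ u)) (sqrtOneSub C *ᵥ u) := by
    convert (hasSum_sqrtOneSub hC hu hCu).map (mulVec.addMonoidHomLeft u)
      (continuous_id.matrix_mulVec continuous_const) using 1
    · exact funext fun k => (smul_mulVec _ _ _).symm
    · rfl
  have hterm : ∀ k, sqrtCoeff k • u ≤ sqrtCoeff k • (C ^ k *ᵥ u) := fun k => by
    cases k with
    | zero => rw [pow_zero, one_mulVec]
    | succ k =>
      exact smul_le_smul_of_nonpos_left (pow_mulVec_le hC hCu _) (sqrtCoeff_succ_nonpos k)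
  exact (smul_nonneg tsum_sqrtCoeff_nonneg fun i => (hu i).le).trans
    (hasSum_le hterm (summable_abs_sqrtCoeff.of_abs.hasSum.smul_const u) hT)

lemma sqrtOneSub_apply_le_one (hC : ∀ i j, 0 ≤ C i j) (hu : ∀ i, 0 < u i)
    (hCu : C *ᵥ u ≤ u) (i j : ι) : sqrtOneSub C i j ≤ (1 : Matrix ι ι ℝ) i j := by
  have hT : HasSum (fun k => sqrtCoeff k * (C ^ k) i j) (sqrtOneSub C i j) :=
    Pi.hasSum.mp (Pi.hasSum.mp (hasSum_sqrtOneSub hC hu hCu) i) j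
  refine hasSum_le (fun k => ?_) hT (hasSum_ite_eq 0 ((1 : Matrix ι ι ℝ) i j))
  cases k with
  | zero => simp [sqrtCoeff_zero]
  | succ k =>
    rw [if_neg k.succ_ne_zero]
    exact mul_nonpos_of_nonpos_of_nonneg (sqrtCoeff_succ_nonpos k) (pow_apply_nonneg hC _ i j)

lemma exists_eq_smul_one_sub {α : ℝ} {B : Matrix ι ι ℝ} (hB : ∀ i j, 0 ≤ B i j)
    (hAu : 0 ≤ (α • 1 - B) *ᵥ u) :
    ∃ (s : ℝ) (C : Matrix ι ι ℝ), 0 < s ∧ (∀ i j, 0 ≤ C i j) ∧ C *ᵥ u ≤ u ∧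
      α • 1 - B = s • (1 - C) := by
  set s := max α 0 + 1
  have hs : 0 < s := by positivity
  have hsα : 0 ≤ s - α := by linarith [le_max_left α 0]
  refine ⟨s, s⁻¹ • (B + (s - α) • 1), hs, fun i j => ?_, ?_, ?_⟩
  · simp only [Matrix.smul_apply, Matrix.add_apply, one_apply, smul_eq_mul]
    exact mul_nonneg (inv_nonneg.2 hs.le)
      (add_nonneg (hB i j) (mul_nonneg hsα (by split_ifs <;> norm_num)))
  · have hCu : (s⁻¹ • (B + (s - α) • 1)) *ᵥ u = u - s⁻¹ • ((α • 1 - B) *ᵥ u) := by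
      ext i
      simp only [smul_mulVec, add_mulVec, sub_mulVec, one_mulVec, Pi.smul_apply, Pi.add_apply,
        Pi.sub_apply, smul_eq_mul]
      field_simp
      ring
    rw [hCu]
    exact sub_le_self _ (smul_nonneg (inv_nonneg.2 hs.le) hAu)
  · rw [smul_sub, smul_inv_smul₀ hs.ne']
    module

end NonnegMatrix

lemma Complex.re_pos_of_norm_sub_le {r : ℝ} {μ : ℂ} (h : ‖(r : ℂ) - μ‖ ≤ r) (hμ : μ ≠ 0) :
    0 < μ.re := by
  have hr : 0 ≤ r := (norm_nonneg _).trans h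
  have hsq : Complex.normSq ((r : ℂ) - μ) ≤ r ^ 2 := by
    rw [← Complex.sq_norm]; exact pow_le_pow_left₀ (norm_nonneg _) h 2
  have hμ' := Complex.normSq_pos.mpr hμ
  simp only [Complex.normSq_apply, Complex.sub_re, Complex.ofReal_re, Complex.sub_im,
    Complex.ofReal_im] at hsq hμ'
  nlinarith

section ZMatrix

variable {n : ℕ} {M : Matrix (Fin n) (Fin n) ℝ} {u : Fin n → ℝ} {r : ℝ}

lemma IsEig.toC_smul_one_sub {μ : ℂ} (h : IsEig (toC (r • 1 - M)) μ) : IsEig (toC M) (r - μ) := by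
  obtain ⟨v, hv, hMv⟩ := h
  have hC : toC (r • 1 - M) = (r : ℂ) • 1 - toC M := by
    ext i j
    by_cases hij : i = j <;> simp [toC, one_apply, hij]
  refine ⟨v, hv, ?_⟩
  rw [hC, sub_mulVec, smul_mulVec, one_mulVec, sub_eq_iff_eq_add] at hMv
  rw [sub_smul, hMv, add_sub_cancel_left]

lemma norm_le_of_isEig_toC (hM : ∀ i j, 0 ≤ M i j) (hu : ∀ i, 0 < u i) (hMu : M *ᵥ u ≤ r • u)
    {μ : ℂ} (hμ : IsEig (toC M) μ) : ‖μ‖ ≤ r := by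
  obtain ⟨v, hv, hMv⟩ := hμ
  obtain ⟨j₀, hj₀⟩ := Function.ne_iff.mp hv
  have : Nonempty (Fin n) := ⟨j₀⟩
  obtain ⟨i, hi⟩ := Finite.exists_max fun j => ‖v j‖ / u j
  set t := ‖v i‖ / u i
  have ht : 0 < t := (div_pos (norm_pos_iff.mpr hj₀) (hu j₀)).trans_le (hi j₀)
  have hvi : ‖v i‖ = t * u i := (div_mul_cancel₀ _ (hu i).ne').symm
  have key : ‖μ‖ * ‖v i‖ ≤ r * ‖v i‖ := calc
    ‖μ‖ * ‖v i‖ = ‖∑ j, (M i j : ℂ) * v j‖ := by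
      rw [← norm_mul, ← smul_eq_mul, ← Pi.smul_apply, ← hMv]; rfl
    _ ≤ ∑ j, M i j * ‖v j‖ := norm_sum_le_of_le _ fun j _ => by
      rw [norm_mul, Complex.norm_real, Real.norm_of_nonneg (hM i j)]
    _ ≤ ∑ j, M i j * (t * u j) := sum_le_sum fun j _ =>
      mul_le_mul_of_nonneg_left ((div_le_iff₀ (hu j)).mp (hi j)) (hM i j)
    _ = t * (M *ᵥ u) i := by
      simp only [mulVec, dotProduct, mul_sum]
      exact sum_congr rfl fun j _ => by ring
    _ ≤ t * (r * u i) := mul_le_mul_of_nonneg_left (hMu i) ht.le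
    _ = r * ‖v i‖ := by rw [hvi]; ring
  exact le_of_mul_le_mul_right key (hvi ▸ mul_pos ht (hu i))

lemma isMmat_smul_one_sub (hr : 0 ≤ r) (hM : ∀ i j, 0 ≤ M i j) (hu : ∀ i, 0 < u i)
    (hMu : M *ᵥ u ≤ r • u) : IsMmat (r • 1 - M) :=
  ⟨r, M, hM, Real.sSup_le (fun _ ⟨_, hμ, hx⟩ => hx ▸ norm_le_of_isEig_toC hM hu hMu hμ) hr, rfl⟩

lemma re_pos_of_isEig_smul_one_sub (hM : ∀ i j, 0 ≤ M i j) (hu : ∀ i, 0 < u i)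
    (hMu : M *ᵥ u ≤ r • u) {μ : ℂ} (hμ : IsEig (toC (r • 1 - M)) μ) (hμ0 : μ ≠ 0) :
    0 < μ.re :=
  Complex.re_pos_of_norm_sub_le (norm_le_of_isEig_toC hM hu hMu hμ.toC_smul_one_sub) hμ0

end ZMatrix

/-- If A is an M-matrix with a triplet representation, then the principal square root of A
exists, is an M-matrix, and admits a triplet representation. -/
theorem stmt10 {n : ℕ} (A : Matrix (Fin n) (Fin n) ℝ) (hA : IsMmat A)
    (ht : ∃ (u w : Fin n → ℝ), (∀ i, 0 < u i) ∧ (∀ i, 0 ≤ w i) ∧ A *ᵥ u = w) :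
    ∃ S : Matrix (Fin n) (Fin n) ℝ,
      (∃ p : Polynomial ℝ, S = Polynomial.aeval A p) ∧
      S * S = A ∧
      (∀ μ : ℂ, IsEig (toC S) μ → μ ≠ 0 → 0 < μ.re) ∧
      IsMmat S ∧
      ∃ (u w : Fin n → ℝ), (∀ i, 0 < u i) ∧ (∀ i, 0 ≤ w i) ∧ S *ᵥ u = w := by
  obtain ⟨α, B, hB, -, rfl⟩ := hA
  obtain ⟨u, w, hu, hw, rfl⟩ := ht
  obtain ⟨s, C, hs, hC, hCu, hAC⟩ := exists_eq_smul_one_sub hB hw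
  rw [hAC]
  set S := √s • sqrtOneSub C
  have hSu : 0 ≤ S *ᵥ u := by
    rw [smul_mulVec]
    exact smul_nonneg (Real.sqrt_nonneg s) (sqrtOneSub_mulVec_nonneg hC hu hCu)
  have hM : ∀ i j, 0 ≤ (√s • 1 - S) i j := fun i j => by
    rw [← smul_sub, Matrix.smul_apply, smul_eq_mul, Matrix.sub_apply]
    exact mul_nonneg (Real.sqrt_nonneg s) (sub_nonneg.2 (sqrtOneSub_apply_le_one hC hu hCu i j))
  have hMu : (√s • 1 - S) *ᵥ u ≤ √s • u := by
    rw [sub_mulVec, smul_mulVec, one_mulVec]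
    exact sub_le_self _ hSu
  refine ⟨S, ?_, ?_, ?_, ?_, u, _, hu, hSu, rfl⟩
  · have hS := Subalgebra.smul_mem _ (sqrtOneSub_mem_adjoin_smul_one_sub hs.ne' C) √s
    rw [Algebra.adjoin_singleton_eq_range_aeval] at hS
    obtain ⟨p, hp⟩ := hS
    exact ⟨p, hp.symm⟩
  · rw [smul_mul_smul_comm, Real.mul_self_sqrt hs.le, sqrtOneSub_mul_self_of_mulVec_le hC hu hCu]
  · rw [← sub_sub_cancel (√s • 1) S]
    exact fun μ => re_pos_of_isEig_smul_one_sub hM hu hMu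
  · rw [← sub_sub_cancel (√s • 1) S]
    exact isMmat_smul_one_sub (Real.sqrt_nonneg s) hM hu hMu
end

section
/- Let A = I − C be an M-matrix with C ≥ 0, ρ(C) ≤ 1, with triplet representation (−offdiag(A), u, v). Define W₀ = A − I, Z₀ = 2(A + I), and the Cyclic Reduction recursion W_{ℓ+1} = −W_ℓ Z_ℓ^{-1} W_ℓ, Z_{ℓ+1} = Z_ℓ + 2W_{ℓ+1}. Define p₀ = 4v, p_{ℓ+1} = p_ℓ − 2W_ℓ Z_ℓ^{-1} p_ℓ, and v_ℓ = p_ℓ − 2W_ℓ u. Then for all ℓ ≥ 0 (assuming Z_ℓ invertible at each step): p_ℓ ≥ 0, v_ℓ ≥ 0, and Z_ℓ u = v_ℓ, so (−offdiag(Z_ℓ), u, v_ℓ) is a triplet representation of Z_ℓ. -/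
open Matrix

/-!
The identity `Z_ℓ u = p_ℓ - 2 W_ℓ u` propagates along the recursion because
`W_ℓ Z_ℓ⁻¹ (p_ℓ - 2 W_ℓ u) = W_ℓ u`, which is exactly what makes the new terms in
`Z_{ℓ+1} u` and `p_{ℓ+1} - 2 W_{ℓ+1} u` agree. Nonnegativity is a sign count: `W_ℓ ≤ 0` and
`Z_ℓ⁻¹ ≥ 0` make `W_ℓ Z_ℓ⁻¹ p_ℓ` and `W_ℓ u` nonpositive.
-/

namespace Matrix

variable {ι R : Type*} [Fintype ι] [Semiring R] [PartialOrder R] [IsOrderedRing R]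
  {M : Matrix ι ι R} {x : ι → R}

theorem mulVec_nonneg_of_nonneg (hM : ∀ i j, 0 ≤ M i j) (hx : 0 ≤ x) : 0 ≤ M *ᵥ x :=
  fun i => dotProduct_nonneg_of_nonneg (hM i) hx

theorem mulVec_nonpos_of_nonpos_of_nonneg (hM : ∀ i j, M i j ≤ 0) (hx : 0 ≤ x) :
    M *ᵥ x ≤ 0 :=
  fun i => (dotProduct_le_dotProduct_of_nonneg_right (hM i) hx).trans_eq (zero_dotProduct x)

end Matrix

namespace CyclicReduction

variable {ι R : Type*} [Fintype ι] [DecidableEq ι] [CommRing R]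

theorem triplet_zero {A : Matrix ι ι R} {u v : ι → R} (hAu : A *ᵥ u = v) :
    ((2 : R) • (A + 1)) *ᵥ u = (4 : R) • v - (2 : R) • ((A - 1) *ᵥ u) := by
  rw [smul_mulVec, add_mulVec, sub_mulVec, one_mulVec, hAu]
  module

theorem triplet_succ {W Z : Matrix ι ι R} {u p : ι → R} (hZ : IsUnit Z)
    (hZu : Z *ᵥ u = p - (2 : R) • (W *ᵥ u)) :
    (Z + (2 : R) • -(W * Z⁻¹ * W)) *ᵥ u =
      (p - (2 : R) • (W *ᵥ (Z⁻¹ *ᵥ p))) - (2 : R) • (-(W * Z⁻¹ * W) *ᵥ u) := by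
  have hinv : Z⁻¹ *ᵥ (p - (2 : R) • (W *ᵥ u)) = u := by
    rw [← hZu, mulVec_mulVec, nonsing_inv_mul _ ((isUnit_iff_isUnit_det Z).mp hZ), one_mulVec]
  have key := congrArg (W *ᵥ ·) hinv
  simp only [mulVec_sub, mulVec_smul] at key
  rw [add_mulVec, smul_mulVec, neg_mulVec, ← mulVec_mulVec, ← mulVec_mulVec, hZu]
  linear_combination (norm := module) (2 : R) • key

end CyclicReduction

theorem stmt11_general {n : ℕ} (A : Matrix (Fin n) (Fin n) ℝ)
    (u v : Fin n → ℝ) (hu : ∀ i, 0 < u i) (hv : ∀ i, 0 ≤ v i) (hAu : A *ᵥ u = v)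
    (W Z : ℕ → Matrix (Fin n) (Fin n) ℝ) (p : ℕ → Fin n → ℝ)
    (hW0 : W 0 = A - 1) (hZ0 : Z 0 = (2 : ℝ) • (A + 1))
    (hWrec : ∀ ℓ, W (ℓ+1) = -(W ℓ * (Z ℓ)⁻¹ * W ℓ))
    (hZrec : ∀ ℓ, Z (ℓ+1) = Z ℓ + (2 : ℝ) • W (ℓ+1))
    (hp0 : p 0 = (4 : ℝ) • v)
    (hprec : ∀ ℓ, p (ℓ+1) = p ℓ - (2 : ℝ) • (W ℓ *ᵥ ((Z ℓ)⁻¹ *ᵥ p ℓ)))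
    (hZinv : ∀ ℓ, IsUnit (Z ℓ))
    (hWneg : ∀ ℓ i j, W ℓ i j ≤ 0)
    (hZinvnn : ∀ ℓ i j, 0 ≤ (Z ℓ)⁻¹ i j) :
    ∀ ℓ, (∀ i, 0 ≤ p ℓ i) ∧
      (∀ i, 0 ≤ (p ℓ - (2 : ℝ) • (W ℓ *ᵥ u)) i) ∧
      Z ℓ *ᵥ u = p ℓ - (2 : ℝ) • (W ℓ *ᵥ u) := by
  have sub_two_smul_nonneg {x y : Fin n → ℝ} (hx : 0 ≤ x) (hy : y ≤ 0) :
      0 ≤ x - (2 : ℝ) • y :=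
    sub_nonneg.2 ((smul_nonpos_of_nonneg_of_nonpos zero_le_two hy).trans hx)
  have hp : ∀ ℓ, 0 ≤ p ℓ := by
    intro ℓ
    induction ℓ with
    | zero => exact hp0 ▸ smul_nonneg zero_le_four hv
    | succ ℓ ih =>
      rw [hprec]
      exact sub_two_smul_nonneg ih <| mulVec_nonpos_of_nonpos_of_nonneg (hWneg ℓ) <|
        mulVec_nonneg_of_nonneg (hZinvnn ℓ) ih
  have hZu : ∀ ℓ, Z ℓ *ᵥ u = p ℓ - (2 : ℝ) • (W ℓ *ᵥ u) := by
    intro ℓ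
    induction ℓ with
    | zero => rw [hZ0, hW0, hp0]; exact CyclicReduction.triplet_zero hAu
    | succ ℓ ih =>
      rw [hZrec, hWrec, hprec]; exact CyclicReduction.triplet_succ (hZinv ℓ) ih
  exact fun ℓ => ⟨hp ℓ, sub_two_smul_nonneg (hp ℓ) <|
    mulVec_nonpos_of_nonpos_of_nonneg (hWneg ℓ) fun i => (hu i).le, hZu ℓ⟩

/-- Triplet representation of the Cyclic Reduction iterates: with W₀ = A - I,
Z₀ = 2(A+I), W_{ℓ+1} = -W_ℓ Z_ℓ⁻¹ W_ℓ, Z_{ℓ+1} = Z_ℓ + 2W_{ℓ+1}, p₀ = 4v,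
p_{ℓ+1} = p_ℓ - 2 W_ℓ Z_ℓ⁻¹ p_ℓ and v_ℓ = p_ℓ - 2 W_ℓ u, one has p_ℓ ≥ 0, v_ℓ ≥ 0 and
Z_ℓ u = v_ℓ, i.e. (-offdiag Z_ℓ, u, v_ℓ) is a triplet representation of Z_ℓ. -/
theorem stmt11 {n : ℕ} (A C : Matrix (Fin n) (Fin n) ℝ) (hA : IsMmat A)
    (hAC : A = 1 - C) (hCnn : ∀ i j, 0 ≤ C i j) (hρ : specRad C ≤ 1)
    (u v : Fin n → ℝ) (hu : ∀ i, 0 < u i) (hv : ∀ i, 0 ≤ v i) (hAu : A *ᵥ u = v)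
    (W Z : ℕ → Matrix (Fin n) (Fin n) ℝ) (p : ℕ → Fin n → ℝ)
    (hW0 : W 0 = A - 1) (hZ0 : Z 0 = (2 : ℝ) • (A + 1))
    (hWrec : ∀ ℓ, W (ℓ+1) = -(W ℓ * (Z ℓ)⁻¹ * W ℓ))
    (hZrec : ∀ ℓ, Z (ℓ+1) = Z ℓ + (2 : ℝ) • W (ℓ+1))
    (hp0 : p 0 = (4 : ℝ) • v)
    (hprec : ∀ ℓ, p (ℓ+1) = p ℓ - (2 : ℝ) • (W ℓ *ᵥ ((Z ℓ)⁻¹ *ᵥ p ℓ)))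
    (hZinv : ∀ ℓ, IsUnit (Z ℓ))
    (hWneg : ∀ ℓ i j, W ℓ i j ≤ 0)
    (hZinvnn : ∀ ℓ i j, 0 ≤ (Z ℓ)⁻¹ i j) :
    ∀ ℓ, (∀ i, 0 ≤ p ℓ i) ∧
      (∀ i, 0 ≤ (p ℓ - (2 : ℝ) • (W ℓ *ᵥ u)) i) ∧
      Z ℓ *ᵥ u = p ℓ - (2 : ℝ) • (W ℓ *ᵥ u) :=
  stmt11_general A u v hu hv hAu W Z p hW0 hZ0 hWrec hZrec hp0 hprec hZinv hWneg hZinvnn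
end

section
/- Let A be a singular irreducible M-matrix with Au = 0 for u > 0, let w ≥ 0 with uᵀw = 1, Q = σuwᵀ with σ ∈ ℝ \ {2}, and set Ŵ₀ = A − I + Q, Ẑ₀ = 2(A + I) − Q. Then the eigenvalues of Ẑ₀^{-1}Ŵ₀ coincide with those of Z₀^{-1}W₀ = (2(A+I))^{-1}(A−I), except the eigenvalue −1/2 is replaced by (σ−1)/(2−σ). In particular, if σ ∈ (0, 4/3), then all eigenvalues of Ẑ₀^{-1}Ŵ₀ have modulus less than 1/2 on the real line that formerly equaled −1/2, since |(σ−1)/(2−σ)| < 1/2. -/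
open Matrix

def permMat {n : ℕ} (σ : Equiv.Perm (Fin n)) : Matrix (Fin n) (Fin n) ℝ :=
  fun i j => if σ j = i then 1 else 0

def BlockUTR {n : ℕ} (k : ℕ) (B : Matrix (Fin n) (Fin n) ℝ) : Prop :=
  ∀ i j : Fin n, (j : ℕ) < k → k ≤ (i : ℕ) → B i j = 0

/-- A is irreducible: no symmetric permutation puts A in nontrivial block triangular form. -/
def IsIrred {n : ℕ} (A : Matrix (Fin n) (Fin n) ℝ) : Prop :=
  ¬ ∃ (σ : Equiv.Perm (Fin n)) (k : ℕ), 0 < k ∧ k < n ∧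
      BlockUTR k ((permMat σ)ᵀ * A * permMat σ)

/-!
Put `Z = 2(A + 1)`, `W = A - 1` and `Q = σ u wᵀ`. For invertible `M`, `χ(M⁻¹N) · det M` is the
determinant of the pencil `X M - N`, so both characteristic polynomials are read off from the
pencils of `(Z, W)` and `(Z - Q, W + Q)`. The second pencil is the first minus the rank-one matrix
`(X + 1) σ u wᵀ`, and since `A u = 0` the vector `u` is an eigenvector of the first pencil for
`2X + 1`. The matrix determinant lemma in eigenvector form then gives
`(2X + 1) det(X(Z - Q) - (W + Q)) = det(XZ - W) ((2 - σ)X + 1 - σ)`, and, applied to `Z - Q`,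
`2 det(Z - Q) = (2 - σ) det Z`. Invertibility of `A + 1` is the M-matrix property: for
`A = αI - B`, an eigenvalue `-1` of `A` would give the eigenvalue `α + 1 > ρ(B)` of `B`.
-/

open Polynomial

namespace Matrix

variable {R : Type*} [CommRing R] {m : Type*}

noncomputable def pencil (M N : Matrix m m R) : Matrix m m R[X] :=
  (X : R[X]) • M.map C - N.map C

theorem pencil_sub_add_vecMulVec (M N : Matrix m m R) (u v : m → R) :
    pencil (M - vecMulVec u v) (N + vecMulVec u v) =
      pencil M N - vecMulVec (C ∘ u) ((X + 1 : R[X]) • (C ∘ v)) := by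
  ext i j : 1
  simp [pencil, vecMulVec_apply]
  ring

variable [Fintype m]

theorem pencil_mulVec_of_mulVec_eq_smul {M N : Matrix m m R} {u : m → R} {a b : R}
    (hMu : M *ᵥ u = a • u) (hNu : N *ᵥ u = b • u) :
    pencil M N *ᵥ (C ∘ u) = (C a * X - C b) • (C ∘ u) := by
  have hmap : ∀ L : Matrix m m R, L.map C *ᵥ (C ∘ u) = C ∘ (L *ᵥ u) :=
    fun L => funext fun i => (RingHom.map_mulVec C L u i).symm
  rw [pencil, sub_mulVec, smul_mulVec, hmap, hmap, hMu, hNu]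
  funext i
  simp only [Pi.sub_apply, Pi.smul_apply, Function.comp_apply, smul_eq_mul, map_mul]
  ring

variable [DecidableEq m]

/- Multiplying `[[M, u], [vᵀ, 1]]` on the right by `[[1, -u], [0, d]]` makes it block lower
triangular, so neither `M` nor `d` needs to be invertible. -/
theorem mul_det_sub_vecMulVec {M : Matrix m m R} {u : m → R} {d : R} (hMu : M *ᵥ u = d • u)
    (v : m → R) : d * (M - vecMulVec u v).det = M.det * (d - v ⬝ᵥ u) := by
  let N := fromBlocks M (replicateCol Unit u) (replicateRow Unit v) 1
  let P := fromBlocks (1 : Matrix m m R) (replicateCol Unit (-u)) 0 (d • 1 : Matrix Unit Unit R)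
  have hN : N.det = (M - vecMulVec u v).det := by
    rw [det_fromBlocks_one₂₂, vecMulVec_eq Unit]
  have hP : P.det = d := by simp [P, det_fromBlocks_zero₂₁]
  have hNP : N * P = fromBlocks M 0 (replicateRow Unit v) (of fun _ _ => d - v ⬝ᵥ u) := by
    simp only [N, P, fromBlocks_multiply, ← replicateCol_mulVec, mulVec_neg, hMu]
    congr 1 <;> ext <;> simp [sub_eq_neg_add, replicateRow_mulVec_eq_const]
  calc d * (M - vecMulVec u v).det = (N * P).det := by rw [det_mul, hN, hP, mul_comm]
    _ = M.det * (d - v ⬝ᵥ u) := by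
      rw [hNP, det_fromBlocks_zero₁₂, det_unique (n := Unit), of_apply]

theorem charpoly_inv_mul_mul_C_det {M : Matrix m m R} (hM : IsUnit M.det) (N : Matrix m m R) :
    (M⁻¹ * N).charpoly * C M.det = (pencil M N).det := by
  have hfactor : M.map C * charmatrix (M⁻¹ * N) = pencil M N := by
    rw [charmatrix, Matrix.mul_sub, scalar_apply, ← smul_one_eq_diagonal, mul_smul_comm,
      Matrix.mul_one, RingHom.mapMatrix_apply, ← RingHom.mapMatrix_apply,
      ← RingHom.mapMatrix_apply, ← _root_.map_mul, ← Matrix.mul_assoc, mul_nonsing_inv M hM,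
      Matrix.one_mul]
    rfl
  rw [charpoly, RingHom.map_det, mul_comm, ← det_mul, RingHom.mapMatrix_apply, hfactor]

theorem mul_det_pencil_sub_add_vecMulVec {M N : Matrix m m R} {u : m → R} {a b : R}
    (hMu : M *ᵥ u = a • u) (hNu : N *ᵥ u = b • u) (v : m → R) :
    (C a * X - C b) * (pencil (M - vecMulVec u v) (N + vecMulVec u v)).det =
      (pencil M N).det * (C a * X - C b - (X + 1) * C (v ⬝ᵥ u)) := by
  rw [pencil_sub_add_vecMulVec, mul_det_sub_vecMulVec (pencil_mulVec_of_mulVec_eq_smul hMu hNu),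
    smul_dotProduct, ← RingHom.map_dotProduct, smul_eq_mul]

end Matrix

open Matrix

theorem isRoot_charpoly_of_isEig {n : ℕ} {M : Matrix (Fin n) (Fin n) ℂ} {μ : ℂ}
    (h : IsEig M μ) : M.charpoly.IsRoot μ := by
  obtain ⟨v, hv, hMv⟩ := h
  rw [IsRoot, eval_charpoly, ← exists_mulVec_eq_zero_iff]
  exact ⟨v, hv, by simp [sub_mulVec, hMv]⟩

theorem bddAbove_norm_isEig {n : ℕ} (M : Matrix (Fin n) (Fin n) ℂ) :
    BddAbove {r : ℝ | ∃ μ : ℂ, IsEig M μ ∧ r = ‖μ‖} :=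
  ((finite_setOfPred_isRoot (charpoly_monic M).ne_zero).image (‖·‖)).bddAbove.mono
    (by rintro _ ⟨μ, hμ, rfl⟩; exact ⟨μ, isRoot_charpoly_of_isEig hμ, rfl⟩)

theorem norm_le_specRad {n : ℕ} {B : Matrix (Fin n) (Fin n) ℝ} {μ : ℂ}
    (h : IsEig (toC B) μ) : ‖μ‖ ≤ specRad B :=
  le_csSup (bddAbove_norm_isEig _) ⟨μ, h, rfl⟩

theorem isEig_toC {n : ℕ} {M : Matrix (Fin n) (Fin n) ℝ} {v : Fin n → ℝ} (hv : v ≠ 0) {μ : ℝ}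
    (hMv : M *ᵥ v = μ • v) : IsEig (toC M) μ := by
  refine ⟨fun i => v i, ?_, ?_⟩
  · contrapose! hv
    ext i
    simpa using congrFun hv i
  · ext i
    have hmap := RingHom.map_mulVec Complex.ofRealHom M v i
    rw [hMv] at hmap
    exact hmap.symm.trans (by simp)

theorem IsMmat.det_add_smul_one_ne_zero {n : ℕ} {A : Matrix (Fin n) (Fin n) ℝ} (hA : IsMmat A)
    {t : ℝ} (ht : 0 < t) : (A + t • 1).det ≠ 0 := by
  obtain ⟨α, B, -, hρ, rfl⟩ := hA
  intro hdet
  obtain ⟨v, hv, hv0⟩ := exists_mulVec_eq_zero_iff.mpr hdet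
  have hBv : B *ᵥ v = (α + t) • v := by
    rw [add_mulVec, sub_mulVec, smul_mulVec, smul_mulVec, one_mulVec] at hv0
    rw [add_smul]
    linear_combination -hv0
  have hle := (norm_le_specRad (isEig_toC hv hBv)).trans hρ
  rw [Complex.norm_real, Real.norm_eq_abs] at hle
  linarith [le_abs_self (α + t)]

theorem charpoly_rankOne_shift {m : Type*} [Fintype m] [DecidableEq m] {A : Matrix m m ℝ}
    (hA : IsUnit (A + 1).det) {u w : m → ℝ} (hAu : A *ᵥ u = 0) (huw : u ⬝ᵥ w = 1) {σ : ℝ}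
    (hσ : σ ≠ 2) :
    (((2 : ℝ) • (A + 1) - σ • vecMulVec u w)⁻¹ * (A - 1 + σ • vecMulVec u w)).charpoly *
        (X + C (1 / 2)) =
      (((2 : ℝ) • (A + 1))⁻¹ * (A - 1)).charpoly * (X - C ((σ - 1) / (2 - σ))) := by
  set Z : Matrix m m ℝ := (2 : ℝ) • (A + 1)
  set W : Matrix m m ℝ := A - 1
  rw [← vecMulVec_smul]
  have hwu : (σ • w) ⬝ᵥ u = σ := by
    rw [smul_dotProduct, dotProduct_comm, huw, smul_eq_mul, mul_one]
  have hZu : Z *ᵥ u = (2 : ℝ) • u := by rw [smul_mulVec, add_mulVec, hAu, one_mulVec, zero_add]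
  have hWu : W *ᵥ u = (-1 : ℝ) • u := by rw [sub_mulVec, hAu, one_mulVec, zero_sub, neg_one_smul]
  have h2σ : (2 : ℝ) - σ ≠ 0 := sub_ne_zero.mpr hσ.symm
  have hZ : Z.det ≠ 0 := by
    rw [det_smul]
    exact mul_ne_zero (pow_ne_zero _ two_ne_zero) (isUnit_iff_ne_zero.mp hA)
  have hdet : 2 * (Z - vecMulVec u (σ • w)).det = Z.det * (2 - σ) := by
    rw [mul_det_sub_vecMulVec hZu, hwu]
  have hZ' : (Z - vecMulVec u (σ • w)).det ≠ 0 := fun h => by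
    rw [h, mul_zero] at hdet
    exact mul_ne_zero hZ h2σ hdet.symm
  have hpencil := mul_det_pencil_sub_add_vecMulVec hZu hWu (σ • w)
  rw [hwu, C_neg, C_1, C_ofNat, sub_neg_eq_add] at hpencil
  have hχ := charpoly_inv_mul_mul_C_det (isUnit_iff_ne_zero.mpr hZ') (W + vecMulVec u (σ • w))
  have hχ₀ := charpoly_inv_mul_mul_C_det (isUnit_iff_ne_zero.mpr hZ) W
  have hCdet : 2 * C (Z - vecMulVec u (σ • w)).det = C Z.det * (2 - C σ) := by
    simpa only [map_mul, map_sub, map_ofNat] using congrArg C hdet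
  have hChalf : 2 * C (1 / 2 : ℝ) = 1 := by rw [← C_ofNat, ← C_mul]; norm_num
  have hCshift : (2 - C σ) * C ((σ - 1) / (2 - σ)) = C σ - 1 := by
    rw [← C_ofNat, ← C_sub, ← C_mul, mul_div_cancel₀ _ h2σ, C_sub, C_1]
  refine mul_right_cancel₀ (b := C Z.det * (2 - C σ)) ?_ ?_
  · rw [← C_ofNat, ← C_sub, ← C_mul, C_ne_zero]
    exact mul_ne_zero hZ h2σ
  set χ := ((Z - vecMulVec u (σ • w))⁻¹ * (W + vecMulVec u (σ • w))).charpoly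
  set χ₀ := (Z⁻¹ * W).charpoly
  set Δ := (pencil (Z - vecMulVec u (σ • w)) (W + vecMulVec u (σ • w))).det
  linear_combination (-(χ * (X + C (1 / 2 : ℝ)))) * hCdet + (2 * X + 2 * C (1 / 2 : ℝ)) * hχ +
    hpencil + Δ * hChalf - ((2 - C σ) * X + 1 - C σ) * hχ₀ + χ₀ * C Z.det * hCshift

theorem stmt13_general {n : ℕ} (A : Matrix (Fin n) (Fin n) ℝ) (hA : IsMmat A)
    (u w : Fin n → ℝ) (hAu : A *ᵥ u = 0)
    (huw : u ⬝ᵥ w = 1)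
    (σ : ℝ) (hσ : σ ≠ 2) :
    (((2 • (A + 1) - σ • vecMulVec u w)⁻¹ * (A - 1 + σ • vecMulVec u w)).charpoly *
        (Polynomial.X + Polynomial.C ((1 : ℝ)/2)) =
      (((2 : ℝ) • (A + 1))⁻¹ * (A - 1)).charpoly *
        (Polynomial.X - Polynomial.C ((σ - 1)/(2 - σ)))) ∧
    (0 < σ → σ < 4/3 → |(σ - 1)/(2 - σ)| < 1/2) := by
  have hA1 : IsUnit (A + 1).det :=
    isUnit_iff_ne_zero.mpr (by simpa using hA.det_add_smul_one_ne_zero one_pos)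
  refine ⟨?_, fun hσ0 hσ1 => ?_⟩
  · rw [← ofNat_smul_eq_nsmul ℝ 2]
    exact charpoly_rankOne_shift hA1 hAu huw hσ
  · have h2σ : 0 < 2 - σ := by linarith
    rw [abs_div, abs_of_pos h2σ, div_lt_iff₀ h2σ, abs_lt]
    constructor <;> linarith

/-- Shift technique for CR: the eigenvalues of Ẑ₀⁻¹Ŵ₀ are those of Z₀⁻¹W₀ except that
-1/2 is replaced by (σ-1)/(2-σ), expressed as an identity of characteristic polynomials;
moreover if σ ∈ (0, 4/3) then |(σ-1)/(2-σ)| < 1/2. -/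
theorem stmt13 {n : ℕ} (A : Matrix (Fin n) (Fin n) ℝ) (hA : IsMmat A)
    (hsing : ¬ IsUnit A) (hirr : IsIrred A)
    (u w : Fin n → ℝ) (hu : ∀ i, 0 < u i) (hAu : A *ᵥ u = 0)
    (hw : ∀ i, 0 ≤ w i) (huw : u ⬝ᵥ w = 1)
    (σ : ℝ) (hσ : σ ≠ 2) :
    (((2 • (A + 1) - σ • vecMulVec u w)⁻¹ * (A - 1 + σ • vecMulVec u w)).charpoly *
        (Polynomial.X + Polynomial.C ((1 : ℝ)/2)) =
      (((2 : ℝ) • (A + 1))⁻¹ * (A - 1)).charpoly *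
        (Polynomial.X - Polynomial.C ((σ - 1)/(2 - σ)))) ∧
    (0 < σ → σ < 4/3 → |(σ - 1)/(2 - σ)| < 1/2) :=
  stmt13_general A hA u w hAu huw σ hσ
end

section
/- Define real sequences by ω₀ = σ − 1, ζ₀ = 2 − σ, ω_{ℓ+1} = −ω_ℓ²/ζ_ℓ, ζ_{ℓ+1} = ζ_ℓ + 2ω_{ℓ+1}, where 0 < σ < 1. Then for all ℓ ≥ 0: ω_ℓ < 0, ζ_ℓ > 0, and 0 < −ω_ℓ/ζ_ℓ < 1/2. -/
/-- The scalar sequences of the shifted CR iteration: ω₀ = σ-1, ζ₀ = 2-σ,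
ω_{ℓ+1} = -ω_ℓ²/ζ_ℓ, ζ_{ℓ+1} = ζ_ℓ + 2ω_{ℓ+1}, with 0 < σ < 1, satisfy
ω_ℓ < 0, ζ_ℓ > 0 and 0 < -ω_ℓ/ζ_ℓ < 1/2 for all ℓ. -/
theorem stmt14 (σ : ℝ) (hσ0 : 0 < σ) (hσ1 : σ < 1) (ω ζ : ℕ → ℝ)
    (hω0 : ω 0 = σ - 1) (hζ0 : ζ 0 = 2 - σ)
    (hωrec : ∀ ℓ, ω (ℓ+1) = -(ω ℓ)^2 / ζ ℓ)
    (hζrec : ∀ ℓ, ζ (ℓ+1) = ζ ℓ + 2 * ω (ℓ+1)) :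
    ∀ ℓ, ω ℓ < 0 ∧ 0 < ζ ℓ ∧ 0 < -(ω ℓ) / ζ ℓ ∧ -(ω ℓ) / ζ ℓ < 1/2 := by
  intro ℓ
  induction ℓ with
  | zero =>
    rw [hω0, hζ0]
    refine ⟨by linarith, by linarith, div_pos (by linarith) (by linarith), ?_⟩
    rw [div_lt_iff₀ (by linarith)]
    linarith
  | succ n ih =>
    obtain ⟨hωn, hζn, hpos, hlt⟩ := ih
    have hhalf : -(ω n) < ζ n / 2 := by
      rw [div_lt_iff₀ hζn] at hlt
      linarith
    have hsq : 4 * (ω n)^2 < (ζ n)^2 := by nlinarith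
    have hω' : ω (n+1) < 0 := by
      rw [hωrec n]
      exact div_neg_of_neg_of_pos (by nlinarith) hζn
    have hζeq : ζ (n+1) = ((ζ n)^2 - 2 * (ω n)^2) / ζ n := by
      rw [hζrec n, hωrec n]; field_simp; ring
    have hζ' : 0 < ζ (n+1) := by
      rw [hζeq]; exact div_pos (by nlinarith) hζn
    refine ⟨hω', hζ', div_pos (by linarith) hζ', ?_⟩
    rw [div_lt_iff₀ hζ', hζeq, hωrec n]
    have h2 : (ω n)^2 / ζ n < ζ n / 4 := by
      rw [div_lt_div_iff₀ hζn (by norm_num)]; nlinarith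
    have h3 : ((ζ n)^2 - 2 * (ω n)^2) / ζ n = ζ n - 2 * ((ω n)^2 / ζ n) := by
      field_simp
    have h4 : -(ω n)^2 / ζ n = -((ω n)^2 / ζ n) := by ring
    rw [h3, h4]
    have h5 : (0:ℝ) ≤ (ω n)^2 / ζ n := by positivity
    nlinarith
end

section
/- With the notation of the shifted CR iteration (Ŵ_{ℓ+1} = −Ŵ_ℓẐ_ℓ^{-1}Ŵ_ℓ, Ẑ_{ℓ+1} = Ẑ_ℓ + 2Ŵ_{ℓ+1}), if Ŵ₀ ≤ 0 entrywise, Ẑ₀ is a nonsingular M-matrix, and the scalar sequences satisfy ω₀ = σ−1 < 0, ζ₀ = 2−σ > 0 with 0 < σ < 1 and Ẑ_ℓ u = ζ_ℓ u, Ŵ_ℓ u = ω_ℓ u for u > 0, then for all ℓ ≥ 1: Ŵ_ℓ ≤ 0 and Ẑ_ℓ is a nonsingular M-matrix. -/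
open Matrix

/-! A Z-matrix `A` admitting a positive vector `u` with `A u > 0` is monotone (`A x ≥ 0` forces
`x ≥ 0`, by looking at the index minimising `x i / u i`), hence invertible with nonnegative
inverse; and it is an M-matrix because `α I - A` is nonnegative with `(α I - A) u ≤ α u`, which
bounds every eigenvalue by `α`. Along the shifted CR iteration `Ŵ_ℓ ≤ 0` and `Ẑ_ℓ` stays a
Z-matrix, since `Ŵ_ℓ Ẑ_ℓ⁻¹ Ŵ_ℓ ≥ 0`, while `Ẑ_ℓ u = ζ_ℓ u` with `ζ_ℓ > 0` because the ratio
`-ω_ℓ / ζ_ℓ` stays in `[0, 1/2)`. -/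

def IsZMatrix {ι : Type*} (A : Matrix ι ι ℝ) : Prop :=
  ∀ i j, i ≠ j → A i j ≤ 0

namespace IsZMatrix

variable {ι : Type*} {A : Matrix ι ι ℝ}

theorem add_smul {W : Matrix ι ι ℝ} (hA : IsZMatrix A) (hW : ∀ i j, W i j ≤ 0) {c : ℝ}
    (hc : 0 ≤ c) : IsZMatrix (A + c • W) := fun i j hij => by
  simpa using add_nonpos (hA i j hij) (mul_nonpos_of_nonneg_of_nonpos hc (hW i j))

variable [Fintype ι] {u : ι → ℝ}

theorem nonneg_of_mulVec_nonneg (hA : IsZMatrix A) (hu : ∀ i, 0 < u i)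
    (hAu : ∀ i, 0 < (A *ᵥ u) i) {x : ι → ℝ} (hx : ∀ i, 0 ≤ (A *ᵥ x) i) (i : ι) : 0 ≤ x i := by
  have : Nonempty ι := ⟨i⟩
  obtain ⟨i₀, hi₀⟩ := Finite.exists_min fun j => x j / u j
  set c := x i₀ / u i₀
  have hcu : ∀ j, c * u j ≤ x j := fun j => (le_div_iff₀ (hu j)).mp (hi₀ j)
  have hc : 0 ≤ c := by
    by_contra! hc
    have hrow : (A *ᵥ x) i₀ ≤ c * (A *ᵥ u) i₀ := by
      simp only [mulVec, dotProduct, Finset.mul_sum]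
      refine Finset.sum_le_sum fun j _ => ?_
      rcases eq_or_ne i₀ j with rfl | hj
      · have hxi₀ : x i₀ = c * u i₀ := (div_mul_cancel₀ _ (hu i₀).ne').symm
        rw [hxi₀]; exact (mul_left_comm _ _ _).le
      · nlinarith [hA i₀ j hj, hcu j]
    nlinarith [hx i₀, hAu i₀]
  nlinarith [hcu i, hu i]

theorem isUnit [DecidableEq ι] (hA : IsZMatrix A) (hu : ∀ i, 0 < u i)
    (hAu : ∀ i, 0 < (A *ᵥ u) i) : IsUnit A := by
  rw [isUnit_iff_isUnit_det, isUnit_iff_ne_zero]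
  intro hdet
  obtain ⟨v, hv0, hv⟩ := exists_mulVec_eq_zero_iff.mpr hdet
  refine hv0 (funext fun i => le_antisymm ?_ (hA.nonneg_of_mulVec_nonneg hu hAu (by simp [hv]) i))
  simpa using hA.nonneg_of_mulVec_nonneg hu hAu (x := -v) (by simp [mulVec_neg, hv]) i

theorem inv_nonneg [DecidableEq ι] (hA : IsZMatrix A) (hu : ∀ i, 0 < u i)
    (hAu : ∀ i, 0 < (A *ᵥ u) i) (i j : ι) : 0 ≤ A⁻¹ i j := by
  have hdet : IsUnit A.det := (isUnit_iff_isUnit_det A).mp (hA.isUnit hu hAu)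
  have hcol : A *ᵥ (A⁻¹ *ᵥ Pi.single j 1) = Pi.single j 1 := by
    rw [mulVec_mulVec, mul_nonsing_inv A hdet, one_mulVec]
  have := hA.nonneg_of_mulVec_nonneg hu hAu (x := A⁻¹ *ᵥ Pi.single j 1)
    (fun k => by rw [hcol, Pi.single_apply]; split_ifs <;> norm_num) i
  simpa [mulVec_single] using this

end IsZMatrix

theorem IsMmat.isZMatrix {n : ℕ} {A : Matrix (Fin n) (Fin n) ℝ} (hA : IsMmat A) :
    IsZMatrix A := by
  obtain ⟨α, B, hB, -, rfl⟩ := hA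
  intro i j hij
  simpa [one_apply_ne hij] using hB i j

theorem nonneg_mul_mul_of_nonpos {ι : Type*} [Fintype ι] {W N : Matrix ι ι ℝ}
    (hW : ∀ i j, W i j ≤ 0) (hN : ∀ i j, 0 ≤ N i j) (i j : ι) : 0 ≤ (W * N * W) i j := by
  rw [mul_apply]
  refine Finset.sum_nonneg fun l _ => mul_nonneg_of_nonpos_of_nonpos ?_ (hW l j)
  rw [mul_apply]
  exact Finset.sum_nonpos fun k _ => mul_nonpos_of_nonpos_of_nonneg (hW i k) (hN k l)

/-- Collatz–Wielandt bound. -/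
theorem norm_le_of_isEig_of_mulVec_le {n : ℕ} {B : Matrix (Fin n) (Fin n) ℝ}
    {u : Fin n → ℝ} {r : ℝ} (hB : ∀ i j, 0 ≤ B i j) (hu : ∀ i, 0 < u i)
    (hBu : ∀ i, (B *ᵥ u) i ≤ r * u i) {μ : ℂ} (hμ : IsEig (toC B) μ) : ‖μ‖ ≤ r := by
  obtain ⟨v, hv0, hv⟩ := hμ
  obtain ⟨j₀, hj₀⟩ := Function.ne_iff.mp hv0
  have : Nonempty (Fin n) := ⟨j₀⟩
  obtain ⟨i₀, hi₀⟩ := Finite.exists_max fun j => ‖v j‖ / u j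
  set c := ‖v i₀‖ / u i₀
  have hvc : ∀ j, ‖v j‖ ≤ c * u j := fun j => (div_le_iff₀ (hu j)).mp (hi₀ j)
  have hc : 0 ≤ c := div_nonneg (norm_nonneg _) (hu i₀).le
  have hcu₀ : c * u i₀ = ‖v i₀‖ := div_mul_cancel₀ _ (hu i₀).ne'
  have hvi₀ : 0 < ‖v i₀‖ := by
    have hcu : 0 < c * u j₀ := (norm_pos_iff.mpr hj₀).trans_le (hvc j₀)
    exact (div_pos_iff_of_pos_right (hu i₀)).mp (pos_of_mul_pos_left hcu (hu j₀).le)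
  have hrow : ‖μ‖ * ‖v i₀‖ ≤ r * ‖v i₀‖ :=
    calc ‖μ‖ * ‖v i₀‖ = ‖∑ j, (B i₀ j : ℂ) * v j‖ := by
          have h : (toC B *ᵥ v) i₀ = μ * v i₀ := by rw [hv]; rfl
          rw [← norm_mul, ← h]; rfl
      _ ≤ ∑ j, B i₀ j * ‖v j‖ := by
          refine (norm_sum_le _ _).trans_eq (Finset.sum_congr rfl fun j _ => ?_)
          rw [norm_mul, Complex.norm_real, Real.norm_of_nonneg (hB i₀ j)]
      _ ≤ c * (B *ᵥ u) i₀ := by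
          simp only [mulVec, dotProduct, Finset.mul_sum]
          exact Finset.sum_le_sum fun j _ => by nlinarith [hvc j, hB i₀ j]
      _ ≤ c * (r * u i₀) := mul_le_mul_of_nonneg_left (hBu i₀) hc
      _ = r * ‖v i₀‖ := by rw [mul_left_comm, hcu₀]
  exact le_of_mul_le_mul_right hrow hvi₀

theorem IsZMatrix.isMmat {n : ℕ} {A : Matrix (Fin n) (Fin n) ℝ} {u : Fin n → ℝ}
    (hA : IsZMatrix A) (hu : ∀ i, 0 < u i) (hAu : ∀ i, 0 ≤ (A *ᵥ u) i) : IsMmat A := by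
  set α := ∑ i, |A i i|
  have hα : 0 ≤ α := Finset.sum_nonneg fun i _ => abs_nonneg _
  have hdiag : ∀ i, A i i ≤ α := fun i =>
    (le_abs_self _).trans (Finset.single_le_sum (fun j _ => abs_nonneg (A j j)) (Finset.mem_univ i))
  have hB : ∀ i j, 0 ≤ (α • 1 - A) i j := by
    intro i j
    rcases eq_or_ne i j with rfl | hij
    · simpa using hdiag i
    · simpa [one_apply_ne hij] using hA i j hij
  have hBu : ∀ i, ((α • 1 - A) *ᵥ u) i ≤ α * u i := fun i => by
    simpa [sub_mulVec, smul_mulVec, one_mulVec] using hAu i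
  refine ⟨α, α • 1 - A, hB, Real.sSup_le ?_ hα, by abel⟩
  rintro _ ⟨μ, hμ, rfl⟩
  exact norm_le_of_isEig_of_mulVec_le hB hu hBu hμ

theorem shiftedCR_scalar_step {ω ζ : ℝ} (hω : ω ≤ 0) (hζ : -2 * ω < ζ) :
    -ω ^ 2 / ζ ≤ 0 ∧ -2 * (-ω ^ 2 / ζ) < ζ + 2 * (-ω ^ 2 / ζ) := by
  have hζ0 : 0 < ζ := by linarith
  refine ⟨div_nonpos_of_nonpos_of_nonneg (by nlinarith) hζ0.le, ?_⟩
  have hgap : ζ + 2 * (-ω ^ 2 / ζ) - -2 * (-ω ^ 2 / ζ) = (ζ ^ 2 - 4 * ω ^ 2) / ζ := by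
    field_simp; ring
  have : 0 < (ζ ^ 2 - 4 * ω ^ 2) / ζ := div_pos (by nlinarith) hζ0
  linarith

theorem shiftedCR_matrix_step {ι : Type*} [Fintype ι] [DecidableEq ι] {W Z : Matrix ι ι ℝ}
    {u : ι → ℝ} (hW : ∀ i j, W i j ≤ 0) (hZ : IsZMatrix Z) (hu : ∀ i, 0 < u i)
    (hZu : ∀ i, 0 < (Z *ᵥ u) i) :
    (∀ i j, (-(W * Z⁻¹ * W)) i j ≤ 0) ∧ IsZMatrix (Z + (2 : ℝ) • -(W * Z⁻¹ * W)) := by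
  have hW' : ∀ i j, (-(W * Z⁻¹ * W)) i j ≤ 0 := fun i j =>
    neg_nonpos.mpr (nonneg_mul_mul_of_nonpos hW (hZ.inv_nonneg hu hZu) i j)
  exact ⟨hW', hZ.add_smul hW' zero_le_two⟩

theorem stmt16_general {n : ℕ} (u : Fin n → ℝ) (hu : ∀ i, 0 < u i)
    (σ : ℝ) (hσ0 : 0 < σ) (hσ1 : σ < 1)
    (W Z : ℕ → Matrix (Fin n) (Fin n) ℝ) (ω ζ : ℕ → ℝ)
    (hWrec : ∀ ℓ, W (ℓ+1) = -(W ℓ * (Z ℓ)⁻¹ * W ℓ))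
    (hZrec : ∀ ℓ, Z (ℓ+1) = Z ℓ + (2 : ℝ) • W (ℓ+1))
    (hW0 : ∀ i j, W 0 i j ≤ 0) (hZ0M : IsMmat (Z 0))
    (hω0 : ω 0 = σ - 1) (hζ0 : ζ 0 = 2 - σ)
    (hωrec : ∀ ℓ, ω (ℓ+1) = -(ω ℓ)^2 / ζ ℓ)
    (hζrec : ∀ ℓ, ζ (ℓ+1) = ζ ℓ + 2 * ω (ℓ+1))
    (heig : ∀ ℓ, W ℓ *ᵥ u = ω ℓ • u ∧ Z ℓ *ᵥ u = ζ ℓ • u) :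
    ∀ ℓ, 1 ≤ ℓ → (∀ i j, W ℓ i j ≤ 0) ∧ IsMmat (Z ℓ) ∧ IsUnit (Z ℓ) := by
  have hscal : ∀ ℓ, ω ℓ ≤ 0 ∧ -2 * ω ℓ < ζ ℓ := by
    intro ℓ
    induction ℓ with
    | zero => constructor <;> linarith
    | succ m ih => rw [hζrec, hωrec]; exact shiftedCR_scalar_step ih.1 ih.2
  have hZu : ∀ ℓ i, 0 < (Z ℓ *ᵥ u) i := fun ℓ i => by
    rw [(heig ℓ).2]
    exact mul_pos (by linarith [hscal ℓ]) (hu i)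
  have hmat : ∀ ℓ, (∀ i j, W ℓ i j ≤ 0) ∧ IsZMatrix (Z ℓ) := by
    intro ℓ
    induction ℓ with
    | zero => exact ⟨hW0, hZ0M.isZMatrix⟩
    | succ m ih => rw [hZrec, hWrec]; exact shiftedCR_matrix_step ih.1 ih.2 hu (hZu m)
  intro ℓ _
  exact ⟨(hmat ℓ).1, (hmat ℓ).2.isMmat hu fun i => (hZu ℓ i).le, (hmat ℓ).2.isUnit hu (hZu ℓ)⟩

/-- If Ŵ₀ ≤ 0, Ẑ₀ is a nonsingular M-matrix, 0 < σ < 1 and Ŵ_ℓ u = ω_ℓ u,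
Ẑ_ℓ u = ζ_ℓ u with the scalar recursions, then Ŵ_ℓ ≤ 0 and Ẑ_ℓ is a nonsingular
M-matrix for all ℓ ≥ 1. -/
theorem stmt16 {n : ℕ} (u : Fin n → ℝ) (hu : ∀ i, 0 < u i)
    (σ : ℝ) (hσ0 : 0 < σ) (hσ1 : σ < 1)
    (W Z : ℕ → Matrix (Fin n) (Fin n) ℝ) (ω ζ : ℕ → ℝ)
    (hWrec : ∀ ℓ, W (ℓ+1) = -(W ℓ * (Z ℓ)⁻¹ * W ℓ))
    (hZrec : ∀ ℓ, Z (ℓ+1) = Z ℓ + (2 : ℝ) • W (ℓ+1))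
    (hW0 : ∀ i j, W 0 i j ≤ 0) (hZ0M : IsMmat (Z 0)) (hZ0inv : IsUnit (Z 0))
    (hω0 : ω 0 = σ - 1) (hζ0 : ζ 0 = 2 - σ)
    (hωrec : ∀ ℓ, ω (ℓ+1) = -(ω ℓ)^2 / ζ ℓ)
    (hζrec : ∀ ℓ, ζ (ℓ+1) = ζ ℓ + 2 * ω (ℓ+1))
    (heig : ∀ ℓ, W ℓ *ᵥ u = ω ℓ • u ∧ Z ℓ *ᵥ u = ζ ℓ • u) :
    ∀ ℓ, 1 ≤ ℓ → (∀ i j, W ℓ i j ≤ 0) ∧ IsMmat (Z ℓ) ∧ IsUnit (Z ℓ) :=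
  stmt16_general u hu σ hσ0 hσ1 W Z ω ζ hWrec hZrec hW0 hZ0M hω0 hζ0 hωrec hζrec heig
end

section
/- Let the unshifted CR sequences be W₀ = A − I, Z₀ = 2(A+I), W_{ℓ+1} = −W_ℓZ_ℓ^{-1}W_ℓ, Z_{ℓ+1} = Z_ℓ + 2W_{ℓ+1}, where A is a singular M-matrix with Au = 0, u > 0, and each Z_ℓ is invertible. Then for all ℓ ≥ 0: Z_ℓ u = 2^{1−ℓ} u and W_ℓ u = −2^{−ℓ} u; in particular W_ℓ Z_ℓ^{-1} u = −(1/2)u. -/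
open Matrix

/-! Since `A u = 0`, the vector `u` is a common eigenvector of all `W ℓ` and `Z ℓ`, with
eigenvalues obeying the scalar recursion `ω (ℓ+1) = -ω ℓ ^ 2 / ζ ℓ`, `ζ (ℓ+1) = ζ ℓ + 2 ω (ℓ+1)`
from `ω 0 = -1`, `ζ 0 = 2`; it is solved by `ω ℓ = -2 ^ (-ℓ)`, `ζ ℓ = 2 ^ (1 - ℓ)`. -/

namespace Matrix

variable {ι K : Type*} [Fintype ι] [DecidableEq ι] [Field K]

theorem inv_mulVec_eq_inv_smul_of_mulVec_eq_smul {Z : Matrix ι ι K} (hZ : IsUnit Z)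
    {u : ι → K} {z : K} (hz : z ≠ 0) (hZu : Z *ᵥ u = z • u) : Z⁻¹ *ᵥ u = z⁻¹ • u := by
  have := hZ.invertible
  refine inv_mulVec_eq_vec ?_
  rw [mulVec_smul, hZu, smul_smul, inv_mul_cancel₀ hz, one_smul]

theorem mul_inv_mul_mulVec_of_mulVec_eq_smul {W Z : Matrix ι ι K} (hZ : IsUnit Z)
    {u : ι → K} {w z : K} (hz : z ≠ 0) (hWu : W *ᵥ u = w • u) (hZu : Z *ᵥ u = z • u) :
    (W * Z⁻¹ * W) *ᵥ u = (w ^ 2 / z) • u := by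
  rw [← mulVec_mulVec, ← mulVec_mulVec, hWu, mulVec_smul,
    inv_mulVec_eq_inv_smul_of_mulVec_eq_smul hZ hz hZu, mulVec_smul, mulVec_smul, hWu,
    smul_smul, smul_smul]
  congr 1
  ring

theorem cr_mulVec_eq_smul {W Z : ℕ → Matrix ι ι K} {u : ι → K} {ω ζ : ℕ → K}
    (hWrec : ∀ ℓ, W (ℓ + 1) = -(W ℓ * (Z ℓ)⁻¹ * W ℓ))
    (hZrec : ∀ ℓ, Z (ℓ + 1) = Z ℓ + (2 : K) • W (ℓ + 1)) (hZinv : ∀ ℓ, IsUnit (Z ℓ))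
    (hωrec : ∀ ℓ, ω (ℓ + 1) = -(ω ℓ ^ 2 / ζ ℓ)) (hζrec : ∀ ℓ, ζ (ℓ + 1) = ζ ℓ + 2 * ω (ℓ + 1))
    (hζ : ∀ ℓ, ζ ℓ ≠ 0) (hW0 : W 0 *ᵥ u = ω 0 • u) (hZ0 : Z 0 *ᵥ u = ζ 0 • u) (ℓ : ℕ) :
    W ℓ *ᵥ u = ω ℓ • u ∧ Z ℓ *ᵥ u = ζ ℓ • u := by
  induction ℓ with
  | zero => exact ⟨hW0, hZ0⟩
  | succ ℓ ih =>
    obtain ⟨hWu, hZu⟩ := ih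
    have hWu' : W (ℓ + 1) *ᵥ u = ω (ℓ + 1) • u := by
      rw [hWrec, neg_mulVec, mul_inv_mul_mulVec_of_mulVec_eq_smul (hZinv ℓ) (hζ ℓ) hWu hZu,
        hωrec, neg_smul]
    refine ⟨hWu', ?_⟩
    rw [hZrec, add_mulVec, smul_mulVec, hZu, hWu', smul_smul, ← add_smul, hζrec]

end Matrix

theorem stmt17_general {n : ℕ} (A : Matrix (Fin n) (Fin n) ℝ)
    (u : Fin n → ℝ) (hAu : A *ᵥ u = 0)
    (W Z : ℕ → Matrix (Fin n) (Fin n) ℝ)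
    (hW0 : W 0 = A - 1) (hZ0 : Z 0 = (2 : ℝ) • (A + 1))
    (hWrec : ∀ ℓ, W (ℓ+1) = -(W ℓ * (Z ℓ)⁻¹ * W ℓ))
    (hZrec : ∀ ℓ, Z (ℓ+1) = Z ℓ + (2 : ℝ) • W (ℓ+1))
    (hZinv : ∀ ℓ, IsUnit (Z ℓ)) :
    ∀ ℓ : ℕ, Z ℓ *ᵥ u = ((2 : ℝ) ^ (1 - (ℓ : ℤ))) • u ∧
      W ℓ *ᵥ u = (-((2 : ℝ) ^ (-(ℓ : ℤ)))) • u ∧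
      W ℓ *ᵥ ((Z ℓ)⁻¹ *ᵥ u) = (-(1/2 : ℝ)) • u := by
  have hζ (ℓ : ℕ) : (2 : ℝ) ^ (1 - (ℓ : ℤ)) = 2 * 2 ^ (-(ℓ : ℤ)) := by
    rw [sub_eq_add_neg, zpow_add₀ two_ne_zero, zpow_one]
  have hω (ℓ : ℕ) : (2 : ℝ) ^ (-((ℓ + 1 : ℕ) : ℤ)) = 2 ^ (-(ℓ : ℤ)) / 2 := by
    rw [Nat.cast_succ, neg_add, zpow_add₀ two_ne_zero, _root_.zpow_neg_one, div_eq_mul_inv]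
  have hζ_ne (ℓ : ℕ) : (2 : ℝ) ^ (1 - (ℓ : ℤ)) ≠ 0 := zpow_ne_zero _ two_ne_zero
  have eigen := cr_mulVec_eq_smul (u := u) (ω := fun ℓ : ℕ ↦ -(2 : ℝ) ^ (-(ℓ : ℤ)))
    (ζ := fun ℓ : ℕ ↦ (2 : ℝ) ^ (1 - (ℓ : ℤ))) hWrec hZrec hZinv
    (fun ℓ ↦ by simp only [hω, hζ]; field_simp) (fun ℓ ↦ by simp only [hω, hζ]; ring) hζ_ne
    (by simp [hW0, sub_mulVec, hAu]) (by simp [hZ0, smul_mulVec, add_mulVec, hAu])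
  intro ℓ
  obtain ⟨hWu, hZu⟩ := eigen ℓ
  refine ⟨hZu, hWu, ?_⟩
  rw [inv_mulVec_eq_inv_smul_of_mulVec_eq_smul (hZinv ℓ) (hζ_ne ℓ) hZu, mulVec_smul, hWu,
    smul_smul, hζ]
  field_simp

/-- For the unshifted CR applied to a singular M-matrix with Au = 0, u > 0:
Z_ℓ u = 2^{1-ℓ} u and W_ℓ u = -2^{-ℓ} u; in particular W_ℓ Z_ℓ⁻¹ u = -(1/2) u. -/
theorem stmt17 {n : ℕ} (A : Matrix (Fin n) (Fin n) ℝ) (hA : IsMmat A)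
    (u : Fin n → ℝ) (hu : ∀ i, 0 < u i) (hAu : A *ᵥ u = 0)
    (W Z : ℕ → Matrix (Fin n) (Fin n) ℝ)
    (hW0 : W 0 = A - 1) (hZ0 : Z 0 = (2 : ℝ) • (A + 1))
    (hWrec : ∀ ℓ, W (ℓ+1) = -(W ℓ * (Z ℓ)⁻¹ * W ℓ))
    (hZrec : ∀ ℓ, Z (ℓ+1) = Z ℓ + (2 : ℝ) • W (ℓ+1))
    (hZinv : ∀ ℓ, IsUnit (Z ℓ)) :
    ∀ ℓ : ℕ, Z ℓ *ᵥ u = ((2 : ℝ) ^ (1 - (ℓ : ℤ))) • u ∧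
      W ℓ *ᵥ u = (-((2 : ℝ) ^ (-(ℓ : ℤ)))) • u ∧
      W ℓ *ᵥ ((Z ℓ)⁻¹ *ᵥ u) = (-(1/2 : ℝ)) • u :=
  stmt17_general A u hAu W Z hW0 hZ0 hWrec hZrec hZinv
end

section
/- Let A be a singular irreducible M-matrix with Au = 0, u > 0, and suppose the shifted CR limit Ŝ = lim Ẑ_ℓ exists and satisfies Ŝ = S + uzᵀ for some vector z, where S = 4A^{1/2}. If Ŝ is invertible, then S = 16AŜ^{-1}, hence A^{1/2} = 4AŜ^{-1}. -/
open Matrix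

/-
Since X u = 0, the correction S + u zᵀ is invisible after left multiplication by S = 4X:
S Ŝ = S² = 16 X² = 16 A. Cancelling the invertible Ŝ gives S = 16 A Ŝ⁻¹, and dividing by 4
gives X = 4 A Ŝ⁻¹.
-/

theorem Matrix.mul_add_vecMulVec_of_mulVec_eq_zero {l m n α : Type*} [Fintype m]
    [NonUnitalSemiring α] (M : Matrix l m α) (N : Matrix m n α) {u : m → α} (z : n → α)
    (hu : M *ᵥ u = 0) : M * (N + vecMulVec u z) = M * N := by
  rw [Matrix.mul_add, mul_vecMulVec, hu, zero_vecMulVec, add_zero]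

theorem stmt19_general {n : ℕ} (A X S Shat : Matrix (Fin n) (Fin n) ℝ)
    (u z : Fin n → ℝ)
    (hXsq : X * X = A) (hXu : X *ᵥ u = 0) (hS : S = (4 : ℝ) • X)
    (hShat : Shat = S + vecMulVec u z) (hinv : IsUnit Shat) :
    S = (16 : ℝ) • (A * Shat⁻¹) ∧ X = (4 : ℝ) • (A * Shat⁻¹) := by
  have hSu : S *ᵥ u = 0 := by rw [hS, smul_mulVec, hXu, smul_zero]
  have hSShat : S * Shat = (16 : ℝ) • A := by
    rw [hShat, mul_add_vecMulVec_of_mulVec_eq_zero _ _ _ hSu, hS, smul_mul_smul_comm, hXsq]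
    norm_num
  have hSeq : S = (16 : ℝ) • (A * Shat⁻¹) := by
    rw [← Matrix.smul_mul, ← hSShat,
      mul_nonsing_inv_cancel_right _ _ ((isUnit_iff_isUnit_det Shat).mp hinv)]
  have hX4 : (4 : ℝ) • X = (4 : ℝ) • ((4 : ℝ) • (A * Shat⁻¹)) := by
    rw [← hS, hSeq, smul_smul]
    norm_num
  exact ⟨hSeq, smul_right_injective _ four_ne_zero hX4⟩

/-- If Ŝ = S + u zᵀ with S = 4 A^{1/2} (so S u = 0, S² = 16A) and Ŝ invertible, then
S = 16 A Ŝ⁻¹ and hence A^{1/2} = 4 A Ŝ⁻¹. -/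
theorem stmt19 {n : ℕ} (A X S Shat : Matrix (Fin n) (Fin n) ℝ) (hA : IsMmat A)
    (hsing : ¬ IsUnit A)
    (u z : Fin n → ℝ) (hu : ∀ i, 0 < u i) (hAu : A *ᵥ u = 0)
    (hXsq : X * X = A) (hXu : X *ᵥ u = 0) (hS : S = (4 : ℝ) • X)
    (hShat : Shat = S + vecMulVec u z) (hinv : IsUnit Shat) :
    S = (16 : ℝ) • (A * Shat⁻¹) ∧ X = (4 : ℝ) • (A * Shat⁻¹) :=
  stmt19_general A X S Shat u z hXsq hXu hS hShat hinv
end
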